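/- arXiv:0911.3933 — 8 statements merged into one kernel-verified Lean document; each statement's English description precedes it below -/
import Mathlib

section
/- Let s_n = x₁ + ⋯ + x_n be a d-dimensional measure-theoretic martingale with respect to a filtration {𝓕_n}, whose differences x_n take values in a bounded set D ⊆ ℝ^d almost everywhere. Then with probability one the sequence ‖s_n‖ / √(max(1, tr V_n · log(tr V_n))), n = 1, 2, …, is bounded, where V_n = x₁x₁ᵗ + ⋯ + x_n x_nᵗ, i.e. tr V_n = Σ_{i=1}^{n} ‖x_i‖². -/
/-!
For a real martingale `f` with increments bounded by `K` and `(f (n+1) - f n)² ≤ v (n+1)`, the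
elementary bound `exp (u - u²) ≤ 1 + u` for `|u| ≤ 1/4` makes
`exp (λ (f n - f 0) - λ² V_n)`, `V_n = v 1 + ⋯ + v n`, a nonnegative supermartingale whenever
`|λ| K ≤ 1/4`. By Ville's maximal inequality it ever exceeds `e^{2k}` with probability at most
`e^{-2k}`, so by Borel–Cantelli along `λ_k = √(k / e^k)`, almost surely for all large `k` and all
`n`, `λ_k (f n - f 0) < 2k + λ_k² V_n`. Taking `k ≈ log V_n` gives
`f n - f 0 = O(√(V_n log V_n))`. The vector case follows by applying this to `±` each coordinate
of `s`, with `v i = ‖s i - s (i-1)‖²`.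
-/

open MeasureTheory Filter Finset Topology

theorem exp_sub_sq_le_one_add {u : ℝ} (hu : |u| ≤ 1 / 4) : Real.exp (u - u ^ 2) ≤ 1 + u := by
  have hu1 : |-u| < 1 := by rw [abs_neg]; linarith
  have hpos : 0 < 1 + u := by linarith [neg_abs_le u]
  -- `|log (1 + u) - u + u² / 2| ≤ |u|³ / (1 - |u|)`
  have htaylor := Real.abs_log_sub_add_sum_range_le hu1 2
  simp only [sum_range_succ, sum_range_zero, abs_neg, sub_neg_eq_add] at htaylor
  have hrem : |u| ^ 3 / (1 - |u|) ≤ u ^ 2 / 2 := by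
    rw [div_le_iff₀ (by linarith), ← sq_abs u]
    nlinarith [abs_nonneg u, pow_two_nonneg |u|]
  have hlog : u - u ^ 2 ≤ Real.log (1 + u) := by
    have := (abs_le.1 (htaylor.trans hrem)).1
    norm_num at this
    nlinarith
  calc Real.exp (u - u ^ 2) ≤ Real.exp (Real.log (1 + u)) := Real.exp_le_exp.2 hlog
    _ = 1 + u := Real.exp_log hpos

theorem EuclideanSpace.norm_le_sum_abs {ι : Type*} [Fintype ι] (x : EuclideanSpace ℝ ι) :
    ‖x‖ ≤ ∑ j, |x j| := by
  conv_lhs => rw [← (EuclideanSpace.basisFun ι ℝ).sum_repr x]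
  exact (norm_sum_le _ _).trans_eq (by simp [norm_smul])

theorem exists_nat_le_exp_and_mul_exp_le {k₁ : ℕ} (hk₁ : 1 ≤ k₁) (u : ℝ) :
    ∃ k : ℕ, k₁ ≤ k ∧ u ≤ Real.exp k ∧
      k * Real.exp k ≤ 6 * (k₁ * Real.exp k₁) * max 1 (u * Real.log u) := by
  have hM : 1 ≤ max 1 (u * Real.log u) := le_max_left _ _
  have hk₁e : 1 ≤ (k₁ : ℝ) * Real.exp k₁ :=
    one_le_mul_of_one_le_of_one_le (by exact_mod_cast hk₁) (Real.one_le_exp (Nat.cast_nonneg _))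
  rcases le_or_gt u (Real.exp k₁) with hu | hu
  · exact ⟨k₁, le_rfl, hu, by nlinarith⟩
  have hupos : 0 < u := (Real.exp_pos _).trans hu
  have hlog : (k₁ : ℝ) < Real.log u := (Real.lt_log_iff_exp_lt hupos).2 hu
  have hlog1 : 1 ≤ Real.log u := le_trans (by exact_mod_cast hk₁) hlog.le
  refine ⟨⌈Real.log u⌉₊, ?_, ?_, ?_⟩
  · exact_mod_cast hlog.le.trans (Nat.le_ceil _)
  · exact (Real.log_le_iff_le_exp hupos).1 (Nat.le_ceil _)
  · have hceil : (⌈Real.log u⌉₊ : ℝ) < Real.log u + 1 := Nat.ceil_lt_add_one (by linarith)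
    have hexp : Real.exp ⌈Real.log u⌉₊ ≤ 3 * u := by
      calc Real.exp ⌈Real.log u⌉₊ ≤ Real.exp (Real.log u + 1) := Real.exp_le_exp.2 hceil.le
        _ = Real.exp 1 * u := by rw [Real.exp_add, Real.exp_log hupos, mul_comm]
        _ ≤ 3 * u := by gcongr; exact Real.exp_one_lt_d9.le.trans (by norm_num)
    have := le_max_right 1 (u * Real.log u)
    calc (⌈Real.log u⌉₊ : ℝ) * Real.exp ⌈Real.log u⌉₊ ≤ (2 * Real.log u) * (3 * u) := by
          gcongr; linarith
      _ ≤ 6 * (k₁ * Real.exp k₁) * max 1 (u * Real.log u) := by nlinarith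

theorem exists_le_mul_sqrt_of_eventually {g u : ℕ → ℝ}
    (h : ∀ᶠ k : ℕ in atTop, ∀ n, √(k / Real.exp k) * g n - √(k / Real.exp k) ^ 2 * u n < 2 * k) :
    ∃ C, ∀ n, g n ≤ C * √(max 1 (u n * Real.log (u n))) := by
  obtain ⟨k₁, hk₁⟩ := eventually_atTop.1 (h.and (eventually_ge_atTop 1))
  refine ⟨3 * √(6 * (k₁ * Real.exp k₁)), fun n => ?_⟩
  obtain ⟨k, hk, huk, hgrid⟩ := exists_nat_le_exp_and_mul_exp_le (hk₁ k₁ le_rfl).2 (u n)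
  have hkpos : (0 : ℝ) < k := by exact_mod_cast (hk₁ k hk).2
  set l := √(k / Real.exp k)
  have hl : 0 < l := Real.sqrt_pos.2 (div_pos hkpos (Real.exp_pos _))
  have hlk : l ^ 2 * Real.exp k = k := by
    rw [Real.sq_sqrt (div_pos hkpos (Real.exp_pos _)).le, div_mul_cancel₀ _ (Real.exp_pos _).ne']
  -- `u n ≤ e^k = k / l²` turns the hypothesis at `k` into `l * g n < 3 * k`
  have hg : g n ≤ 3 * k / l := by
    rw [le_div_iff₀ hl, mul_comm]
    nlinarith [(hk₁ k hk).1 n, mul_le_mul_of_nonneg_left huk (sq_nonneg l)]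
  have hsq : (k / l) ^ 2 = k * Real.exp k := by
    rw [div_pow, div_eq_iff (pow_pos hl 2).ne']
    linear_combination (-(k : ℝ)) * hlk
  have hkl : k / l ≤ √(6 * (k₁ * Real.exp k₁)) * √(max 1 (u n * Real.log (u n))) := by
    rw [← Real.sqrt_mul (by positivity), Real.le_sqrt (by positivity) (by positivity), hsq]
    exact hgrid
  calc g n ≤ 3 * (k / l) := by rwa [mul_div_assoc] at hg
    _ ≤ _ := by rw [mul_assoc]; gcongr

section

variable {Ω : Type*} {m0 : MeasurableSpace Ω} {μ : Measure Ω} {ℱ : Filtration ℕ m0}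

theorem MeasureTheory.Martingale.comp_continuousLinearMap {E F : Type*} [NormedAddCommGroup E]
    [NormedSpace ℝ E] [CompleteSpace E] [NormedAddCommGroup F] [NormedSpace ℝ F] [CompleteSpace F]
    {f : ℕ → Ω → E} (hf : Martingale f ℱ μ) (T : E →L[ℝ] F) :
    Martingale (fun n => T ∘ f n) ℱ μ :=
  ⟨fun n => T.continuous.comp_stronglyMeasurable (hf.stronglyAdapted n), fun _ j hij =>
    (T.comp_condExp_comm (hf.integrable j)).symm.trans ((hf.condExp_ae_eq hij).fun_comp T)⟩

variable [IsFiniteMeasure μ]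

theorem MeasureTheory.Supermartingale.measure_exists_le_ge_le {Z : ℕ → Ω → ℝ}
    (hZ : Supermartingale Z ℱ μ) (hnonneg : 0 ≤ Z) {c : ℝ} (hc : 0 < c) (N : ℕ) :
    μ {ω | ∃ n ≤ N, c ≤ Z n ω} ≤ ENNReal.ofReal ((∫ ω, Z 0 ω ∂μ) / c) := by
  set τ : Ω → ℕ∞ := fun ω => (hittingBtwn Z (Set.Ici c) 0 N ω : ℕ)
  have hτ : IsStoppingTime ℱ τ :=
    hZ.stronglyAdapted.adapted.isStoppingTime_hittingBtwn measurableSet_Ici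
  have hτN : ∀ ω, τ ω ≤ N := fun ω => ENat.natCast_le_natCast.2 (hittingBtwn_le ω)
  have hoptional : ∫ ω, stoppedValue Z τ ω ∂μ ≤ ∫ ω, Z 0 ω ∂μ := by
    have := hZ.neg.expected_stoppedValue_mono (isStoppingTime_const ℱ 0) hτ (fun _ => zero_le) hτN
    simpa [stoppedValue, integral_neg] using this
  have hsubset : {ω | ∃ n ≤ N, c ≤ Z n ω} ⊆ {ω | c ≤ stoppedValue Z τ ω} :=
    fun ω ⟨n, hn, hcn⟩ => stoppedValue_hittingBtwn_mem ⟨n, ⟨zero_le, hn⟩, hcn⟩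
  have hmarkov := mul_meas_ge_le_integral_of_nonneg (Eventually.of_forall fun ω => hnonneg _ ω)
    (integrable_stoppedValue ℕ hτ hZ.integrable hτN) c
  rw [← ofReal_measureReal,
    ENNReal.ofReal_le_ofReal_iff (div_nonneg (integral_nonneg (hnonneg 0)) hc.le), le_div_iff₀ hc]
  calc μ.real {ω | ∃ n ≤ N, c ≤ Z n ω} * c ≤ c * μ.real {ω | c ≤ stoppedValue Z τ ω} := by
        rw [mul_comm]; gcongr; exact measure_ne_top _ _
    _ ≤ ∫ ω, Z 0 ω ∂μ := hmarkov.trans hoptional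

/-- Ville's maximal inequality. -/
theorem MeasureTheory.Supermartingale.measure_exists_ge_le {Z : ℕ → Ω → ℝ}
    (hZ : Supermartingale Z ℱ μ) (hnonneg : 0 ≤ Z) {c : ℝ} (hc : 0 < c) :
    μ {ω | ∃ n, c ≤ Z n ω} ≤ ENNReal.ofReal ((∫ ω, Z 0 ω ∂μ) / c) := by
  have hunion : {ω | ∃ n, c ≤ Z n ω} = ⋃ n, {ω | c ≤ Z n ω} := by ext; simp
  rw [hunion, measure_iUnion_eq_iSup_accumulate]
  refine iSup_le fun N => le_of_eq_of_le ?_ (hZ.measure_exists_le_ge_le hnonneg hc N)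
  congr 1; ext; simp [Set.accumulate]

theorem supermartingale_of_succ_eq_mul {Z W : ℕ → Ω → ℝ} {C : ℝ} (hZ : StronglyAdapted ℱ Z)
    (hZ0 : Integrable (Z 0) μ) (hW : ∀ n, AEStronglyMeasurable (W n) μ)
    (hW_bdd : ∀ n, ∀ᵐ ω ∂μ, ‖W n ω‖ ≤ C) (hsucc : ∀ n, Z (n + 1) = Z n * W n)
    (hnonneg : 0 ≤ Z) (hcond : ∀ n, μ[W n | ℱ n] ≤ᵐ[μ] 1) : Supermartingale Z ℱ μ := by
  have hint : ∀ n, Integrable (Z n) μ := by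
    intro n
    induction n with
    | zero => exact hZ0
    | succ n ih => rw [hsucc]; exact ih.mul_bdd (hW n) (hW_bdd n)
  refine supermartingale_nat hZ hint fun n => ?_
  have hWint : Integrable (W n) μ :=
    (integrable_const C).mono' (hW n) (hW_bdd n)
  rw [hsucc]
  filter_upwards [condExp_mul_of_stronglyMeasurable_left (hZ n) (hsucc n ▸ hint (n + 1)) hWint,
    hcond n] with ω hpull hle
  rw [hpull, Pi.mul_apply]
  exact mul_le_of_le_one_right (hnonneg n ω) hle

variable {f v : ℕ → Ω → ℝ} {K : ℝ}

theorem MeasureTheory.Martingale.condExp_one_add_mul_sub (hf : Martingale f ℱ μ) (l : ℝ) (n : ℕ) :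
    μ[fun ω => 1 + l * (f (n + 1) ω - f n ω) | ℱ n] =ᵐ[μ] 1 := by
  have hdiff := (hf.integrable (n + 1)).sub (hf.integrable n)
  have hmean : μ[f (n + 1) - f n | ℱ n] =ᵐ[μ] 0 := by
    filter_upwards [condExp_sub (hf.integrable (n + 1)) (hf.integrable n) (ℱ n),
      hf.condExp_ae_eq n.le_succ, hf.condExp_ae_eq (le_refl n)] with ω h h1 h2
    simp [h, h1, h2]
  have hsplit : (fun ω => 1 + l * (f (n + 1) ω - f n ω)) =
      (fun _ => 1) + l • (f (n + 1) - f n) := rfl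
  rw [hsplit]
  filter_upwards [condExp_add (integrable_const 1) (hdiff.smul l) (ℱ n),
    condExp_smul l (f (n + 1) - f n) (ℱ n), hmean] with ω h1 h2 h3
  simp [h1, h2, h3, condExp_const (ℱ.le n)]

noncomputable def exponentialProcess (l : ℝ) (f v : ℕ → Ω → ℝ) (n : ℕ) (ω : Ω) : ℝ :=
  Real.exp (l * (f n ω - f 0 ω) - l ^ 2 * ∑ i ∈ Icc 1 n, v i ω)

theorem exponentialProcess_zero (l : ℝ) (f v : ℕ → Ω → ℝ) : exponentialProcess l f v 0 = 1 := by
  ext; simp [exponentialProcess]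

theorem exponentialProcess_succ (l : ℝ) (f v : ℕ → Ω → ℝ) (n : ℕ) :
    exponentialProcess l f v (n + 1) =
      exponentialProcess l f v n *
        fun ω => Real.exp (l * (f (n + 1) ω - f n ω) - l ^ 2 * v (n + 1) ω) := by
  ext ω
  simp only [exponentialProcess, Pi.mul_apply, ← Real.exp_add,
    sum_Icc_succ_top (Nat.le_add_left 1 n)]
  ring_nf

theorem stronglyAdapted_exponentialProcess (l : ℝ) (hf : StronglyAdapted ℱ f)
    (hv : StronglyAdapted ℱ v) : StronglyAdapted ℱ (exponentialProcess l f v) := fun n => by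
  have hsum : StronglyMeasurable[ℱ n] fun ω => ∑ i ∈ Icc 1 n, v i ω :=
    Finset.stronglyMeasurable_fun_sum _ fun i hi => (hv i).mono (ℱ.mono (mem_Icc.1 hi).2)
  exact Real.continuous_exp.comp_stronglyMeasurable
    ((((hf n).sub ((hf 0).mono (ℱ.mono zero_le))).const_mul l).sub (hsum.const_mul _))

theorem supermartingale_exponentialProcess {l : ℝ} (hf : Martingale f ℱ μ)
    (hv : StronglyAdapted ℱ v) (hinc : ∀ n, ∀ᵐ ω ∂μ, |f (n + 1) ω - f n ω| ≤ K)
    (hvar : ∀ n, ∀ᵐ ω ∂μ, (f (n + 1) ω - f n ω) ^ 2 ≤ v (n + 1) ω) (hlK : |l| * K ≤ 1 / 4) :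
    Supermartingale (exponentialProcess l f v) ℱ μ := by
  have hsmall : ∀ n, ∀ᵐ ω ∂μ, |l * (f (n + 1) ω - f n ω)| ≤ 1 / 4 := fun n => by
    filter_upwards [hinc n] with ω h
    rw [abs_mul]
    exact (mul_le_mul_of_nonneg_left h (abs_nonneg l)).trans hlK
  have hW_le : ∀ n, ∀ᵐ ω ∂μ,
      Real.exp (l * (f (n + 1) ω - f n ω) - l ^ 2 * v (n + 1) ω) ≤
        1 + l * (f (n + 1) ω - f n ω) := fun n => by
    filter_upwards [hsmall n, hvar n] with ω hs hsq
    refine le_trans (Real.exp_le_exp.2 ?_) (exp_sub_sq_le_one_add hs)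
    nlinarith [sq_nonneg l]
  have hW_meas : ∀ n, AEStronglyMeasurable
      (fun ω => Real.exp (l * (f (n + 1) ω - f n ω) - l ^ 2 * v (n + 1) ω)) μ := fun n => by
    have := ((hf.stronglyMeasurable (n + 1)).mono (ℱ.le _)).measurable
    have := ((hf.stronglyMeasurable n).mono (ℱ.le _)).measurable
    have := ((hv (n + 1)).mono (ℱ.le _)).measurable
    exact (by fun_prop : Measurable _).aestronglyMeasurable
  have hW_bdd : ∀ n, ∀ᵐ ω ∂μ,
      ‖Real.exp (l * (f (n + 1) ω - f n ω) - l ^ 2 * v (n + 1) ω)‖ ≤ 5 / 4 := fun n => by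
    filter_upwards [hW_le n, hsmall n] with ω hle hs
    rw [Real.norm_eq_abs, abs_of_pos (Real.exp_pos _)]
    linarith [le_abs_self (l * (f (n + 1) ω - f n ω))]
  refine supermartingale_of_succ_eq_mul
    (stronglyAdapted_exponentialProcess l hf.stronglyAdapted hv)
    (by rw [exponentialProcess_zero]; exact integrable_const 1) hW_meas hW_bdd
    (exponentialProcess_succ l f v) (fun n ω => (Real.exp_pos _).le) (fun n => ?_)
  have hint : Integrable (fun ω => 1 + l * (f (n + 1) ω - f n ω)) μ :=
    (integrable_const 1).add (((hf.integrable _).sub (hf.integrable n)).const_mul l)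
  exact (condExp_mono ((integrable_const _).mono' (hW_meas n) (hW_bdd n)) hint (hW_le n)).trans
    (hf.condExp_one_add_mul_sub l n).le

theorem ae_eventually_forall_mul_sub_sq_mul_lt (hf : Martingale f ℱ μ) (hv : StronglyAdapted ℱ v)
    (hinc : ∀ n, ∀ᵐ ω ∂μ, |f (n + 1) ω - f n ω| ≤ K)
    (hvar : ∀ n, ∀ᵐ ω ∂μ, (f (n + 1) ω - f n ω) ^ 2 ≤ v (n + 1) ω)
    {l : ℕ → ℝ} (hlK : ∀ k, |l k| * K ≤ 1 / 4) :
    ∀ᵐ ω ∂μ, ∀ᶠ k in atTop, ∀ n,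
      l k * (f n ω - f 0 ω) - l k ^ 2 * ∑ i ∈ Icc 1 n, v i ω < 2 * k := by
  set r := ENNReal.ofReal (Real.exp (-2))
  have hE : ∀ k : ℕ, μ {ω | ∃ n, Real.exp (2 * k) ≤ exponentialProcess (l k) f v n ω} ≤
      μ Set.univ * r ^ k := fun k => by
    refine ((supermartingale_exponentialProcess hf hv hinc hvar (hlK k)).measure_exists_ge_le
      (fun _ _ => (Real.exp_pos _).le) (Real.exp_pos _)).trans_eq ?_
    rw [exponentialProcess_zero, ← ENNReal.ofReal_pow (Real.exp_pos _).le, ← Real.exp_nat_mul,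
      ← ofReal_measureReal, ← ENNReal.ofReal_mul measureReal_nonneg]
    congr 1
    simp only [Pi.one_apply, integral_const, smul_eq_mul, mul_one, div_eq_mul_inv, ← Real.exp_neg]
    ring_nf
  have hsum : ∑' k : ℕ, μ {ω | ∃ n, Real.exp (2 * k) ≤ exponentialProcess (l k) f v n ω} ≠ ⊤ := by
    refine ne_top_of_le_ne_top ?_ (ENNReal.tsum_le_tsum hE)
    rw [ENNReal.tsum_mul_left, ENNReal.tsum_geometric]
    refine ENNReal.mul_ne_top (measure_ne_top _ _) (ENNReal.inv_ne_top.2 ?_)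
    exact (tsub_pos_iff_lt.2 (ENNReal.ofReal_lt_one.2 (Real.exp_lt_one_iff.2 (by norm_num)))).ne'
  filter_upwards [ae_eventually_notMem hsum] with ω hω
  filter_upwards [hω] with k hk n
  by_contra! hge
  exact hk ⟨n, Real.exp_le_exp.2 hge⟩

theorem ae_exists_sub_le_mul_sqrt (hf : Martingale f ℱ μ) (hv : StronglyAdapted ℱ v)
    (hinc : ∀ n, ∀ᵐ ω ∂μ, |f (n + 1) ω - f n ω| ≤ K)
    (hvar : ∀ n, ∀ᵐ ω ∂μ, (f (n + 1) ω - f n ω) ^ 2 ≤ v (n + 1) ω) (hK : 0 < K) :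
    ∀ᵐ ω ∂μ, ∃ C, ∀ n, f n ω - f 0 ω ≤
      C * √(max 1 ((∑ i ∈ Icc 1 n, v i ω) * Real.log (∑ i ∈ Icc 1 n, v i ω))) := by
  set l : ℕ → ℝ := fun k => min (1 / (4 * K)) √(k / Real.exp k)
  have hlK : ∀ k, |l k| * K ≤ 1 / 4 := fun k => by
    rw [abs_of_nonneg (le_min (by positivity) (Real.sqrt_nonneg _))]
    calc l k * K ≤ 1 / (4 * K) * K := mul_le_mul_of_nonneg_right (min_le_left _ _) hK.le
      _ = 1 / 4 := by field_simp
  have hl : ∀ᶠ k : ℕ in atTop, l k = √(k / Real.exp k) := by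
    have hlim : Tendsto (fun k : ℕ => √(k / Real.exp k)) atTop (𝓝 0) := by
      have := ((Real.continuous_sqrt.tendsto 0).comp
        (Real.tendsto_pow_mul_exp_neg_atTop_nhds_zero 1)).comp tendsto_natCast_atTop_atTop
      rw [Real.sqrt_zero] at this
      exact this.congr fun k => by
        simp only [Function.comp_apply, pow_one, Real.exp_neg, div_eq_mul_inv]
    filter_upwards [hlim.eventually_le_const (by positivity : (0 : ℝ) < 1 / (4 * K))] with k hk
    exact min_eq_right hk
  filter_upwards [ae_eventually_forall_mul_sub_sq_mul_lt hf hv hinc hvar hlK] with ω hω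
  exact exists_le_mul_sqrt_of_eventually ((hω.and hl).mono fun k ⟨hk, hlk⟩ => hlk ▸ hk)

theorem ae_exists_abs_sub_le_mul_sqrt (hf : Martingale f ℱ μ) (hv : StronglyAdapted ℱ v)
    (hinc : ∀ n, ∀ᵐ ω ∂μ, |f (n + 1) ω - f n ω| ≤ K)
    (hvar : ∀ n, ∀ᵐ ω ∂μ, (f (n + 1) ω - f n ω) ^ 2 ≤ v (n + 1) ω) (hK : 0 < K) :
    ∀ᵐ ω ∂μ, ∃ C, ∀ n, |f n ω - f 0 ω| ≤
      C * √(max 1 ((∑ i ∈ Icc 1 n, v i ω) * Real.log (∑ i ∈ Icc 1 n, v i ω))) := by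
  have hneg := ae_exists_sub_le_mul_sqrt hf.neg hv
    (fun n => (hinc n).mono fun ω h => by
      simpa only [Pi.neg_apply, neg_sub_neg, abs_sub_comm (f n ω)])
    (fun n => (hvar n).mono fun ω h => by
      convert h using 1; simp only [Pi.neg_apply]; ring) hK
  filter_upwards [ae_exists_sub_le_mul_sqrt hf hv hinc hvar hK, hneg] with ω ⟨C₁, h₁⟩ ⟨C₂, h₂⟩
  refine ⟨max C₁ C₂, fun n => abs_le.2 ⟨?_, ?_⟩⟩
  · have h := h₂ n
    simp only [Pi.neg_apply, neg_sub_neg] at h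
    rw [neg_le, neg_sub]
    exact h.trans (by gcongr; exact le_max_right _ _)
  · exact (h₁ n).trans (by gcongr; exact le_max_left _ _)

theorem ae_exists_norm_sub_le_mul_sqrt {ι : Type*} [Fintype ι] {s : ℕ → Ω → EuclideanSpace ℝ ι}
    (hs : Martingale s ℱ μ) (hinc : ∀ n, ∀ᵐ ω ∂μ, ‖s (n + 1) ω - s n ω‖ ≤ K) (hK : 0 < K) :
    ∀ᵐ ω ∂μ, ∃ C, ∀ n, ‖s n ω - s 0 ω‖ ≤
      C * √(max 1 ((∑ i ∈ Icc 1 n, ‖s i ω - s (i - 1) ω‖ ^ 2) *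
        Real.log (∑ i ∈ Icc 1 n, ‖s i ω - s (i - 1) ω‖ ^ 2))) := by
  set v : ℕ → Ω → ℝ := fun i ω => ‖s i ω - s (i - 1) ω‖ ^ 2
  have hv : StronglyAdapted ℱ v := fun n =>
    (((hs.stronglyAdapted n).sub ((hs.stronglyAdapted (n - 1)).mono
      (ℱ.mono (Nat.sub_le n 1)))).norm).pow 2
  have hcoord : ∀ j, ∀ᵐ ω ∂μ, ∃ C, ∀ n, |s n ω j - s 0 ω j| ≤
      C * √(max 1 ((∑ i ∈ Icc 1 n, v i ω) * Real.log (∑ i ∈ Icc 1 n, v i ω))) := fun j =>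
    ae_exists_abs_sub_le_mul_sqrt (hs.comp_continuousLinearMap (EuclideanSpace.proj j)) hv
      (fun n => (hinc n).mono fun ω h => (PiLp.norm_apply_le (s (n + 1) ω - s n ω) j).trans h)
      (fun n => ae_of_all _ fun ω => by
        simpa [v, sq_abs] using sq_le_sq.2 ((PiLp.norm_apply_le (s (n + 1) ω - s n ω) j).trans
          (le_abs_self _)))
      hK
  filter_upwards [ae_all_iff.2 hcoord] with ω hω
  choose C hC using hω
  refine ⟨∑ j, C j, fun n => ?_⟩
  calc ‖s n ω - s 0 ω‖ ≤ ∑ j, |s n ω j - s 0 ω j| := EuclideanSpace.norm_le_sum_abs _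
    _ ≤ ∑ j, C j * _ := sum_le_sum fun j _ => hC j n
    _ = _ := (sum_mul _ _ _).symm

end

theorem martingale_bounded_slln_general
    {Ω : Type*} {m0 : MeasurableSpace Ω} (μ : Measure Ω) [IsProbabilityMeasure μ]
    (d : ℕ) (D : Set (EuclideanSpace ℝ (Fin d))) (hD : Bornology.IsBounded D)
    (ℱ : Filtration ℕ m0)
    (s : ℕ → Ω → EuclideanSpace ℝ (Fin d))
    (hmart : Martingale s ℱ μ)
    (hdiff : ∀ n : ℕ, 1 ≤ n → ∀ᵐ ω ∂μ, s n ω - s (n - 1) ω ∈ D) :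
    ∀ᵐ ω ∂μ, ∃ C : ℝ, ∀ n : ℕ, 1 ≤ n →
      ‖s n ω‖ /
        Real.sqrt (max 1
          ((∑ i ∈ Finset.Icc 1 n, ‖s i ω - s (i - 1) ω‖ ^ 2) *
            Real.log (∑ i ∈ Finset.Icc 1 n, ‖s i ω - s (i - 1) ω‖ ^ 2))) ≤ C := by
  obtain ⟨K, hK, hKD⟩ := hD.exists_pos_norm_le
  have hinc : ∀ n, ∀ᵐ ω ∂μ, ‖s (n + 1) ω - s n ω‖ ≤ K := fun n =>
    (hdiff (n + 1) n.succ_pos).mono fun ω h => hKD _ (by simpa using h)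
  filter_upwards [ae_exists_norm_sub_le_mul_sqrt hmart hinc hK] with ω ⟨C, hC⟩
  refine ⟨‖s 0 ω‖ + C, fun n _ => ?_⟩
  set R := √(max 1 ((∑ i ∈ Icc 1 n, ‖s i ω - s (i - 1) ω‖ ^ 2) *
    Real.log (∑ i ∈ Icc 1 n, ‖s i ω - s (i - 1) ω‖ ^ 2)))
  have hR : 1 ≤ R := Real.one_le_sqrt.2 (le_max_left _ _)
  rw [div_le_iff₀ (by linarith)]
  calc ‖s n ω‖ ≤ ‖s 0 ω‖ + ‖s n ω - s 0 ω‖ := norm_le_insert' _ _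
    _ ≤ ‖s 0 ω‖ * R + C * R := add_le_add (le_mul_of_one_le_right (norm_nonneg _) hR) (hC n)
    _ = (‖s 0 ω‖ + C) * R := by ring

/-- Proposition 2.3: let `s_n = x₁ + ⋯ + x_n` be a `d`-dimensional
measure-theoretic martingale whose differences `x_n = s_n − s_{n-1}` lie in a
bounded set `D ⊆ ℝ^d` a.e. Then with probability one the sequence
`‖s_n‖ / √(max 1 (tr V_n · log tr V_n))`, `n = 1, 2, …`, is bounded, where
`tr V_n = Σ_{i=1}^n ‖x_i‖²`. -/
theorem martingale_bounded_slln
    {Ω : Type*} {m0 : MeasurableSpace Ω} (μ : Measure Ω) [IsProbabilityMeasure μ]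
    (d : ℕ) (D : Set (EuclideanSpace ℝ (Fin d))) (hD : Bornology.IsBounded D)
    (ℱ : Filtration ℕ m0)
    (s : ℕ → Ω → EuclideanSpace ℝ (Fin d))
    (hmart : Martingale s ℱ μ)
    (hs0 : s 0 = 0)
    (hdiff : ∀ n : ℕ, 1 ≤ n → ∀ᵐ ω ∂μ, s n ω - s (n - 1) ω ∈ D) :
    ∀ᵐ ω ∂μ, ∃ C : ℝ, ∀ n : ℕ, 1 ≤ n →
      ‖s n ω‖ /
        Real.sqrt (max 1
          ((∑ i ∈ Finset.Icc 1 n, ‖s i ω - s (i - 1) ω‖ ^ 2) *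
            Real.log (∑ i ∈ Finset.Icc 1 n, ‖s i ω - s (i - 1) ω‖ ^ 2))) ≤ C :=
  martingale_bounded_slln_general μ d D hD ℱ s hmart hdiff
end

section
/- For every path x₁, x₂, … ∈ D, the increments of the sequential optimizers converge to zero: Δα_n^* = α_n^* − α_{n-1}^* → 0 as n → ∞. -/
/-!
Subtracting the first-order conditions at times `N` and `N + 1` and pairing with
`Δ = α_{N+1}^* - α_N^*` gives
`∑_{n ≤ N+1} (x_n ⬝ Δ)² / ((1 + α_N^* ⬝ x_n) (1 + α_{N+1}^* ⬝ x_n))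
  = (x_{N+1} ⬝ Δ) / (1 + α_N^* ⬝ x_{N+1})`.
Since `0` is interior to `conv D`, the constraint `ε₀ ≤ 1 + α ⬝ y` on `D` bounds `α ⬝ y` by a
multiple of `‖y‖`, so all factors are bounded above; since the training vectors span, this yields
`c ‖Δ‖² + ∑_{1 ≤ n ≤ N+1} (x_n ⬝ Δ)² ≤ C (x_{N+1} ⬝ Δ)`.
If `‖Δ_N‖ ≥ δ` along a subsequence whose directions converge to `w`, the partial sums of
`(x_n ⬝ w)²` stay bounded, so `x_n ⬝ w → 0`, and then `c ‖Δ_N‖ ≤ C x_{N+1} ⬝ (Δ_N / ‖Δ_N‖) → 0`.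
-/

open Matrix Filter Finset Topology

theorem LinearMap.apply_le_of_closedBall_subset_convexHull {E : Type*} [NormedAddCommGroup E]
    [NormedSpace ℝ E] {D : Set E} {r b : ℝ} (hr : 0 < r)
    (hball : Metric.closedBall 0 r ⊆ convexHull ℝ D) {f : E →ₗ[ℝ] ℝ} (hf : ∀ y ∈ D, -b ≤ f y)
    (y : E) : f y ≤ b / r * ‖y‖ := by
  have hhull : ∀ z ∈ Metric.closedBall (0 : E) r, -b ≤ f z := fun z hz =>
    convexHull_min hf (convex_halfSpace_ge f.isLinear (-b)) (hball hz)
  rcases eq_or_ne y 0 with rfl | hy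
  · simp
  have hny : 0 < ‖y‖ := norm_pos_iff.mpr hy
  have hz := hhull (-(r / ‖y‖) • y) (by
    rw [mem_closedBall_zero_iff, norm_smul, norm_neg, Real.norm_of_nonneg (by positivity),
      div_mul_cancel₀ _ hny.ne'])
  rw [map_smul, smul_eq_mul, neg_mul, neg_le_neg_iff] at hz
  rw [div_mul_eq_mul_div, le_div_iff₀ hr]
  rw [div_mul_eq_mul_div, div_le_iff₀ hny] at hz
  linarith

theorem exists_pos_mul_sq_norm_le_sum_sq {E : Type*} [NormedAddCommGroup E] [NormedSpace ℝ E]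
    [FiniteDimensional ℝ E] {ι : Type*} (s : Finset ι) (ℓ : ι → E →ₗ[ℝ] ℝ)
    (h : ∀ v, (∀ i ∈ s, ℓ i v = 0) → v = 0) :
    ∃ c > 0, ∀ v, c * ‖v‖ ^ 2 ≤ ∑ i ∈ s, ℓ i v ^ 2 := by
  let T : E →ₗ[ℝ] EuclideanSpace ℝ s :=
    (WithLp.linearEquiv 2 ℝ (s → ℝ)).symm.toLinearMap ∘ₗ LinearMap.pi fun i => ℓ i
  have hT : LinearMap.ker T = ⊥ := by
    refine LinearMap.ker_eq_bot'.mpr fun v hv => h v fun i hi => ?_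
    simpa [T] using congrArg (fun w : EuclideanSpace ℝ s => w ⟨i, hi⟩) hv
  obtain ⟨K, -, hK⟩ := T.exists_antilipschitzWith hT
  obtain ⟨c, hc, hcT⟩ := antilipschitzWith_iff_exists_mul_le_norm.mp ⟨K, hK⟩
  refine ⟨c ^ 2, by positivity, fun v => ?_⟩
  have hnorm : ‖T v‖ ^ 2 = ∑ i ∈ s, ℓ i v ^ 2 := by
    rw [EuclideanSpace.real_norm_sq_eq, ← Finset.sum_coe_sort s]
    simp [T]
  rw [← hnorm, ← mul_pow]
  exact pow_le_pow_left₀ (by positivity) (hcT v) 2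

theorem one_add_dotProduct_le_of_closedBall_subset_convexHull {κ : Type*} [Fintype κ]
    {D : Set (κ → ℝ)} {r ε ρ : ℝ} (hr : 0 < r) (hball : Metric.closedBall 0 r ⊆ convexHull ℝ D)
    (hε : ε ≤ 1) {a : κ → ℝ} (ha : ∀ y ∈ D, ε ≤ 1 + a ⬝ᵥ y) {y : κ → ℝ} (hy : ‖y‖ ≤ ρ) :
    1 + a ⬝ᵥ y ≤ 1 + (1 - ε) / r * ρ := by
  have := (dotProductBilin ℝ ℝ a).apply_le_of_closedBall_subset_convexHull hr hball
    (b := 1 - ε) (fun y hy => by simp only [dotProductBilin_apply_apply]; linarith [ha y hy]) y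
  simp only [dotProductBilin_apply_apply] at this
  have := mul_le_mul_of_nonneg_left hy (div_nonneg (sub_nonneg.mpr hε) hr.le)
  linarith

theorem eq_zero_of_dotProduct_eq_zero_of_span_eq_top {κ ι : Type*} [Fintype κ]
    {y : ι → κ → ℝ} {t : Set ι} (hspan : Submodule.span ℝ (y '' t) = ⊤) {v : κ → ℝ}
    (hv : ∀ n ∈ t, y n ⬝ᵥ v = 0) : v = 0 := by
  have : (⊤ : Submodule ℝ (κ → ℝ)) ≤ LinearMap.ker ((dotProductBilin ℝ ℝ).flip v) :=
    hspan ▸ Submodule.span_le.mpr (by rintro _ ⟨n, hn, rfl⟩; simpa using hv n hn)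
  simpa using this (Submodule.mem_top (x := v))

theorem sum_Icc_eq_sum_Icc_add_sum_range {M : Type*} [AddCommMonoid M] (f : ℤ → M) {a : ℤ}
    (ha : a ≤ 1) (N : ℕ) :
    ∑ n ∈ Icc a (N : ℤ), f n = ∑ n ∈ Icc a 0, f n + ∑ i ∈ range N, f (i + 1) := by
  induction N with
  | zero => simp
  | succ N ih =>
    rw [Nat.cast_succ, ← insert_Icc_right_eq_Icc_add_one (by omega),
      sum_insert (by simp), ih, sum_range_succ]
    abel

section FirstOrderConditions

variable {ι κ : Type*} [Fintype κ] [DecidableEq ι] {s : Finset ι} {m : ι} {y : ι → κ → ℝ}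
  {a b : κ → ℝ}

theorem sum_sq_div_eq_of_sum_inv_smul_eq_zero (hm : m ∉ s)
    (ha : ∑ n ∈ s, (1 + a ⬝ᵥ y n)⁻¹ • y n = 0)
    (hb : ∑ n ∈ insert m s, (1 + b ⬝ᵥ y n)⁻¹ • y n = 0)
    (ha₀ : ∀ n ∈ insert m s, 1 + a ⬝ᵥ y n ≠ 0) (hb₀ : ∀ n ∈ insert m s, 1 + b ⬝ᵥ y n ≠ 0) :
    ∑ n ∈ insert m s, (y n ⬝ᵥ (b - a)) ^ 2 / ((1 + a ⬝ᵥ y n) * (1 + b ⬝ᵥ y n)) =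
      y m ⬝ᵥ (b - a) / (1 + a ⬝ᵥ y m) := by
  have hdot : ∀ c : κ → ℝ, ∀ t : Finset ι,
      (∑ n ∈ t, (1 + c ⬝ᵥ y n)⁻¹ • y n) ⬝ᵥ (b - a) =
        ∑ n ∈ t, y n ⬝ᵥ (b - a) / (1 + c ⬝ᵥ y n) := fun c t => by
    simp only [sum_dotProduct, smul_dotProduct, smul_eq_mul, inv_mul_eq_div]
  have hb' := hdot b _ ▸ congrArg (· ⬝ᵥ (b - a)) hb
  have ha' := hdot a _ ▸ congrArg (· ⬝ᵥ (b - a)) ha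
  simp only [zero_dotProduct] at ha' hb'
  have hterm : ∑ n ∈ insert m s, (y n ⬝ᵥ (b - a)) ^ 2 / ((1 + a ⬝ᵥ y n) * (1 + b ⬝ᵥ y n)) =
      ∑ n ∈ insert m s, (y n ⬝ᵥ (b - a) / (1 + a ⬝ᵥ y n) - y n ⬝ᵥ (b - a) / (1 + b ⬝ᵥ y n)) :=
    sum_congr rfl fun n hn => by
      have hab : y n ⬝ᵥ (b - a) = (1 + b ⬝ᵥ y n) - (1 + a ⬝ᵥ y n) := by
        rw [dotProduct_sub, dotProduct_comm (y n), dotProduct_comm (y n)]; ring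
      have := ha₀ n hn
      have := hb₀ n hn
      rw [hab]
      field_simp
  rw [hterm, sum_sub_distrib, hb', sum_insert hm, ha']
  ring

theorem sum_sq_le_of_sum_inv_smul_eq_zero (hm : m ∉ s)
    (ha : ∑ n ∈ s, (1 + a ⬝ᵥ y n)⁻¹ • y n = 0)
    (hb : ∑ n ∈ insert m s, (1 + b ⬝ᵥ y n)⁻¹ • y n = 0) {K ε : ℝ}
    (ha₀ : ∀ n ∈ insert m s, 0 < 1 + a ⬝ᵥ y n) (hb₀ : ∀ n ∈ insert m s, 0 < 1 + b ⬝ᵥ y n)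
    (haK : ∀ n ∈ insert m s, 1 + a ⬝ᵥ y n ≤ K) (hbK : ∀ n ∈ insert m s, 1 + b ⬝ᵥ y n ≤ K)
    (hε : 0 < ε) (hεm : ε ≤ 1 + a ⬝ᵥ y m) :
    ∑ n ∈ insert m s, (y n ⬝ᵥ (b - a)) ^ 2 ≤ K ^ 2 / ε * (y m ⬝ᵥ (b - a)) := by
  have hid := sum_sq_div_eq_of_sum_inv_smul_eq_zero hm ha hb (fun n hn => (ha₀ n hn).ne')
    (fun n hn => (hb₀ n hn).ne')
  have hK : 0 < K := (ha₀ m (mem_insert_self m s)).trans_le (haK m (mem_insert_self m s))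
  have hle : ∑ n ∈ insert m s, (y n ⬝ᵥ (b - a)) ^ 2 / K ^ 2 ≤
      y m ⬝ᵥ (b - a) / (1 + a ⬝ᵥ y m) := hid ▸ sum_le_sum fun n hn =>
    div_le_div_of_nonneg_left (sq_nonneg _) (mul_pos (ha₀ n hn) (hb₀ n hn))
      (by rw [sq]; exact mul_le_mul (haK n hn) (hbK n hn) (hb₀ n hn).le hK.le)
  have ht : 0 ≤ y m ⬝ᵥ (b - a) := by
    have : 0 ≤ y m ⬝ᵥ (b - a) / (1 + a ⬝ᵥ y m) :=
      (sum_nonneg fun n _ => by positivity).trans hle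
    exact (div_nonneg_iff.mp this).elim And.left fun h => absurd h.2 (by linarith)
  rw [← sum_div, div_le_iff₀ (by positivity)] at hle
  calc ∑ n ∈ insert m s, (y n ⬝ᵥ (b - a)) ^ 2
      ≤ y m ⬝ᵥ (b - a) / (1 + a ⬝ᵥ y m) * K ^ 2 := hle
    _ ≤ y m ⬝ᵥ (b - a) / ε * K ^ 2 := by gcongr
    _ = K ^ 2 / ε * (y m ⬝ᵥ (b - a)) := by ring

end FirstOrderConditions

theorem norm_sq_add_sum_sq_le_of_sum_inv_smul_eq_zero {κ : Type*} [Fintype κ] {x : ℤ → κ → ℝ}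
    {α : ℕ → κ → ℝ} {a : ℤ} (ha : a ≤ 1) {c K ε : ℝ}
    (hfoc : ∀ N : ℕ, ∑ n ∈ Icc a (N : ℤ), (1 + α N ⬝ᵥ x n)⁻¹ • x n = 0)
    (hpos : ∀ N n, a ≤ n → 0 < 1 + α N ⬝ᵥ x n) (hK : ∀ N n, a ≤ n → 1 + α N ⬝ᵥ x n ≤ K)
    (hε : 0 < ε) (hεx : ∀ N (n : ℤ), 1 ≤ n → ε ≤ 1 + α N ⬝ᵥ x n)
    (hcoer : ∀ v, c * ‖v‖ ^ 2 ≤ ∑ n ∈ Icc a 0, (x n ⬝ᵥ v) ^ 2) (N : ℕ) :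
    c * ‖α (N + 1) - α N‖ ^ 2 + ∑ i ∈ range (N + 1), (x (i + 1) ⬝ᵥ (α (N + 1) - α N)) ^ 2 ≤
      K ^ 2 / ε * (x (N + 1) ⬝ᵥ (α (N + 1) - α N)) := by
  have hins : insert ((N : ℤ) + 1) (Icc a N) = Icc a ((N + 1 : ℕ) : ℤ) := by
    push_cast; exact insert_Icc_right_eq_Icc_add_one (by omega)
  have hmem : ∀ n ∈ insert ((N : ℤ) + 1) (Icc a N), a ≤ n := fun n hn =>
    (mem_Icc.mp (hins ▸ hn)).1
  have hfocN := sum_sq_le_of_sum_inv_smul_eq_zero (by simp) (hfoc N) (hins ▸ hfoc (N + 1))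
    (fun n hn => hpos N n (hmem n hn)) (fun n hn => hpos (N + 1) n (hmem n hn))
    (fun n hn => hK N n (hmem n hn)) (fun n hn => hK (N + 1) n (hmem n hn)) hε
    (hεx N _ (by omega))
  rw [hins, sum_Icc_eq_sum_Icc_add_sum_range _ ha] at hfocN
  linarith [hcoer (α (N + 1) - α N)]

section Increments

variable {E : Type*} [NormedAddCommGroup E] [NormedSpace ℝ E]

theorem mul_norm_add_norm_mul_sum_sq_inv_norm_smul_le {ι : Type*} {s : Finset ι}
    {ℓ : ι → StrongDual ℝ E} {ℓ' : StrongDual ℝ E} {c C : ℝ} {v : E} (hv : v ≠ 0)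
    (h : c * ‖v‖ ^ 2 + ∑ i ∈ s, ℓ i v ^ 2 ≤ C * ℓ' v) :
    c * ‖v‖ + ‖v‖ * ∑ i ∈ s, ℓ i (‖v‖⁻¹ • v) ^ 2 ≤ C * ℓ' (‖v‖⁻¹ • v) := by
  have hv' : 0 < ‖v‖ := norm_pos_iff.mpr hv
  simp only [map_smul, smul_eq_mul, mul_pow, ← mul_sum] at h ⊢
  rw [← mul_le_mul_iff_of_pos_left hv']
  refine le_of_eq_of_le ?_ (h.trans_eq ?_) <;> field_simp

variable [FiniteDimensional ℝ E]

theorem tendsto_zero_of_norm_sq_add_sum_sq_le {ℓ : ℕ → StrongDual ℝ E} {M : ℝ}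
    (hℓ : ∀ i, ‖ℓ i‖ ≤ M) {Δ : ℕ → E} {c C : ℝ} (hc : 0 < c)
    (h : ∀ N, c * ‖Δ N‖ ^ 2 + ∑ i ∈ range (N + 1), ℓ i (Δ N) ^ 2 ≤ C * ℓ N (Δ N)) :
    Tendsto Δ atTop (𝓝 0) := by
  by_contra hΔ
  obtain ⟨δ, hδ, hfreq⟩ : ∃ δ > 0, ∃ᶠ N in atTop, δ ≤ ‖Δ N‖ := by
    simpa [Metric.tendsto_atTop, frequently_atTop] using hΔ
  obtain ⟨φ, hφ, hφδ⟩ := extraction_of_frequently_atTop hfreq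
  have hΔφ : ∀ k, Δ (φ k) ≠ 0 := fun k => norm_pos_iff.mp (hδ.trans_le (hφδ k))
  set u : ℕ → E := fun k => ‖Δ (φ k)‖⁻¹ • Δ (φ k)
  have hu : ∀ k, ‖u k‖ = 1 := fun k => norm_smul_inv_norm (hΔφ k)
  obtain ⟨w, -, ψ, hψ, huw⟩ := (isCompact_sphere (0 : E) 1).tendsto_subseq
    (x := u) fun k => mem_sphere_zero_iff_norm.mpr (hu k)
  have hnorm k := mul_norm_add_norm_mul_sum_sq_inv_norm_smul_le (hΔφ k) (h (φ k))
  have hbound : ∀ k, |C * ℓ (φ k) (u k)| ≤ |C| * M := fun k => by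
    rw [abs_mul]
    gcongr
    calc |ℓ (φ k) (u k)| ≤ ‖ℓ (φ k)‖ * ‖u k‖ := (ℓ (φ k)).le_opNorm (u k)
      _ ≤ M := by rw [hu, mul_one]; exact hℓ _
  have hsum : ∀ m, δ * ∑ i ∈ range m, ℓ i w ^ 2 ≤ |C| * M := fun m => by
    refine le_of_tendsto ((tendsto_finsetSum _ fun i _ =>
      (((ℓ i).continuous.pow 2).tendsto w).comp huw).const_mul δ) ?_
    filter_upwards [eventually_ge_atTop m] with k hk
    have hmk : m ≤ φ (ψ k) + 1 := by linarith [hψ.le_apply (x := k), hφ.le_apply (x := ψ k)]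
    calc δ * ∑ i ∈ range m, ℓ i (u (ψ k)) ^ 2
        ≤ ‖Δ (φ (ψ k))‖ * ∑ i ∈ range (φ (ψ k) + 1), ℓ i (u (ψ k)) ^ 2 :=
          mul_le_mul (hφδ _) (sum_le_sum_of_subset_of_nonneg (range_subset_range.mpr hmk)
            fun _ _ _ => sq_nonneg _) (sum_nonneg fun _ _ => sq_nonneg _) (norm_nonneg _)
      _ ≤ |C * ℓ (φ (ψ k)) (u (ψ k))| := by
          linarith [hnorm (ψ k), le_abs_self (C * ℓ (φ (ψ k)) (u (ψ k))),
            mul_nonneg hc.le (norm_nonneg (Δ (φ (ψ k))))]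
      _ ≤ |C| * M := hbound _
  have hw : Tendsto (fun i => |ℓ i w|) atTop (𝓝 0) := by
    have := (summable_of_sum_range_le (fun i => sq_nonneg (ℓ i w)) fun m =>
      (le_div_iff₀' hδ).mpr (hsum m)).tendsto_atTop_zero.sqrt
    simpa [Real.sqrt_sq_eq_abs] using this
  have hlim : Tendsto (fun k => |C| * (|ℓ (φ (ψ k)) w| + M * ‖u (ψ k) - w‖)) atTop (𝓝 0) := by
    simpa using ((hw.comp (hφ.comp hψ).tendsto_atTop).add
      ((tendsto_iff_norm_sub_tendsto_zero.mp huw).const_mul M)).const_mul |C|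
  refine (mul_pos hc hδ).not_ge (ge_of_tendsto' hlim fun k => ?_)
  have hlin : ℓ (φ (ψ k)) (u (ψ k)) = ℓ (φ (ψ k)) w + ℓ (φ (ψ k)) (u (ψ k) - w) := by
    rw [map_sub]; ring
  calc c * δ ≤ c * ‖Δ (φ (ψ k))‖ := by gcongr; exact hφδ _
    _ ≤ C * ℓ (φ (ψ k)) (u (ψ k)) := by
        linarith [hnorm (ψ k), mul_nonneg (norm_nonneg (Δ (φ (ψ k))))
          (sum_nonneg fun i (_ : i ∈ range (φ (ψ k) + 1)) => sq_nonneg (ℓ i (u (ψ k))))]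
    _ ≤ |C| * (|ℓ (φ (ψ k)) w| + M * ‖u (ψ k) - w‖) := by
        rw [hlin]
        refine (le_abs_self _).trans ?_
        rw [abs_mul]
        gcongr
        refine (abs_add_le _ _).trans (add_le_add_right ?_ _)
        exact ((ℓ _).le_opNorm _).trans (by gcongr; exact hℓ _)

theorem delta_alpha_tendsto_zero_general
    (d : ℕ)
    (D : Set (Fin d → ℝ)) (hDcpt : IsCompact D)
    (hD0 : (0 : Fin d → ℝ) ∈ interior (convexHull ℝ D))
    (ε₀ : ℝ) (hε₀ : 0 < ε₀ ∧ ε₀ < 1)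
    (n₀ : ℕ)
    (x : ℤ → Fin d → ℝ)
    (hpath : ∀ n : ℤ, 1 ≤ n → x n ∈ D)
    (hspan : Submodule.span ℝ (x '' Set.Icc (-(n₀ : ℤ) + 1) 0) = ⊤)
    (htrain : ∀ α : Fin d → ℝ,
        (∀ n : ℤ, -(n₀ : ℤ) + 1 ≤ n → n ≤ 0 → 0 ≤ 1 + α ⬝ᵥ x n) →
        ∀ y ∈ D, ε₀ ≤ 1 + α ⬝ᵥ y)
    (αs : ℕ → Fin d → ℝ)
    (hαpos : ∀ N : ℕ, ∀ n : ℤ, -(n₀ : ℤ) + 1 ≤ n → n ≤ 0 → 0 < 1 + αs N ⬝ᵥ x n)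
    (hfoc : ∀ N : ℕ,
        ∑ n ∈ Finset.Icc (-(n₀ : ℤ) + 1) (N : ℤ), (1 + αs N ⬝ᵥ x n)⁻¹ • x n = 0) :
    Tendsto (fun n : ℕ => αs (n + 1) - αs n) atTop (nhds 0) := by
  obtain ⟨r, hr, hball⟩ :=
    Metric.nhds_basis_closedBall.mem_iff.mp (mem_interior_iff_mem_nhds.mp hD0)
  obtain ⟨ρ, hρ⟩ := (hDcpt.isBounded.union
    ((Set.finite_Icc (-(n₀ : ℤ) + 1) 0).image x).isBounded).exists_norm_le
  have hD : ∀ N, ∀ y ∈ D, ε₀ ≤ 1 + αs N ⬝ᵥ y := fun N =>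
    htrain _ fun n h₁ h₂ => (hαpos N n h₁ h₂).le
  have hK : ∀ N n, -(n₀ : ℤ) + 1 ≤ n → 1 + αs N ⬝ᵥ x n ≤ 1 + (1 - ε₀) / r * ρ := fun N n hn =>
    one_add_dotProduct_le_of_closedBall_subset_convexHull hr hball hε₀.2.le (hD N) <| hρ _ <|
      (le_or_gt n 0).elim (fun h => .inr ⟨n, ⟨hn, h⟩, rfl⟩) fun h => .inl (hpath n h)
  have hpos : ∀ N n, -(n₀ : ℤ) + 1 ≤ n → 0 < 1 + αs N ⬝ᵥ x n := fun N n hn =>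
    (le_or_gt n 0).elim (hαpos N n hn) fun h => hε₀.1.trans_le (hD N _ (hpath n h))
  obtain ⟨c, hc, hcoer⟩ := exists_pos_mul_sq_norm_le_sum_sq (Icc (-(n₀ : ℤ) + 1) 0)
    (fun n => dotProductBilin ℝ ℝ (x n)) fun v hv =>
      eq_zero_of_dotProduct_eq_zero_of_span_eq_top hspan (by simpa using hv)
  let dotL : (Fin d → ℝ) →L[ℝ] StrongDual ℝ (Fin d → ℝ) := LinearMap.toContinuousLinearMap
    (LinearMap.toContinuousLinearMap.toLinearMap ∘ₗ dotProductBilin ℝ ℝ)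
  obtain ⟨M, hM⟩ := (hDcpt.image dotL.continuous).isBounded.exists_norm_le
  exact tendsto_zero_of_norm_sq_add_sum_sq_le (ℓ := fun i => dotL (x (i + 1)))
    (fun i => hM _ ⟨_, hpath _ (by omega), rfl⟩) hc
    (norm_sq_add_sum_sq_le_of_sum_inv_smul_eq_zero (by omega) hfoc hpos hK hε₀.1
      (fun N n hn => hD N _ (hpath n hn)) (by simpa using hcoer))

/-- Lemma 3.1: for every path `x₁, x₂, … ∈ D`, the increments of the sequential
optimizers converge to zero: `Δα_n^* = α_n^* − α_{n-1}^* → 0` as `n → ∞`. -/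
theorem delta_alpha_tendsto_zero
    (d : ℕ) (hd : 1 ≤ d)
    (D : Set (Fin d → ℝ)) (hDcpt : IsCompact D)
    (hD0 : (0 : Fin d → ℝ) ∈ interior (convexHull ℝ D))
    (ε₀ : ℝ) (hε₀ : 0 < ε₀ ∧ ε₀ < 1)
    (n₀ : ℕ) (hn₀ : d + 1 ≤ n₀)
    (x : ℤ → Fin d → ℝ)
    (hpath : ∀ n : ℤ, 1 ≤ n → x n ∈ D)
    (hspan : Submodule.span ℝ (x '' Set.Icc (-(n₀ : ℤ) + 1) 0) = ⊤)
    (htrain : ∀ α : Fin d → ℝ,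
        (∀ n : ℤ, -(n₀ : ℤ) + 1 ≤ n → n ≤ 0 → 0 ≤ 1 + α ⬝ᵥ x n) →
        ∀ y ∈ D, ε₀ ≤ 1 + α ⬝ᵥ y)
    (Φ : ℕ → (Fin d → ℝ) → ℝ)
    (hΦ : ∀ N α, Φ N α =
        ∑ n ∈ Finset.Icc (-(n₀ : ℤ) + 1) (N : ℤ), Real.log (1 + α ⬝ᵥ x n))
    (αs : ℕ → Fin d → ℝ)
    (hαpos : ∀ N : ℕ, ∀ n : ℤ, -(n₀ : ℤ) + 1 ≤ n → n ≤ 0 → 0 < 1 + αs N ⬝ᵥ x n)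
    (hαmax : ∀ N : ℕ, ∀ α : Fin d → ℝ,
        (∀ n : ℤ, -(n₀ : ℤ) + 1 ≤ n → n ≤ 0 → 0 ≤ 1 + α ⬝ᵥ x n) →
        Φ N α ≤ Φ N (αs N))
    (hfoc : ∀ N : ℕ,
        ∑ n ∈ Finset.Icc (-(n₀ : ℤ) + 1) (N : ℤ), (1 + αs N ⬝ᵥ x n)⁻¹ • x n = 0) :
    Tendsto (fun n : ℕ => αs (n + 1) - αs n) atTop (nhds 0) :=
  delta_alpha_tendsto_zero_general d D hDcpt hD0 ε₀ hε₀ n₀ x hpath hspan htrain αs hαpos hfoc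
end Increments
end

section
/- For every path x₁, x₂, … ∈ D and every N ≥ 1, the difference between the hindsight strategy and SOS satisfies Σ_{n=1}^{N} ΔΦ_n ≤ C₂ ( log|V_{0,N}| − log|V_{0,0}| ), where ΔΦ_n = Φ_{0,n}(α_n^*) − Φ_{0,n}(α_{n-1}^*) ≥ 0 and C₂ = C₁²/ε₀². -/
/-!
Write `g = α_{n-1}^*`, `h = α_n^*` and `u = h - g`. All factors `1 + α·x_k` involved lie in
`(0, C₁]`, where `log` is `C₁⁻²`-strongly concave, so
`ΔΦ_n ≤ ∇Φ_{0,n}(g)·u - uᵀ V_{0,n} u / (2 C₁²)`. By the first-order condition for `g`, only the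
gradient term of the new point `x_n` survives, and it is at most `(u·x_n)/ε₀` when positive.
Cauchy–Schwarz in the inner product of `V_{0,n-1}` gives `(u·x_n)² ≤ (uᵀ V_{0,n-1} u) z` with
`z = x_nᵀ V_{0,n-1}⁻¹ x_n`; maximizing the resulting quadratic in `u·x_n` gives
`ΔΦ_n ≤ C₂ z/(1+z) ≤ C₂ log(1+z)`. By the matrix determinant lemma,
`log(1+z) = log|V_{0,n}| - log|V_{0,n-1}|`, and the sum telescopes.
-/

open Matrix

namespace Real

lemma log_le_sub_inv_div_two {x : ℝ} (hx : 1 ≤ x) : log x ≤ (x - x⁻¹) / 2 := by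
  have h := self_le_sinh_iff.mpr (log_nonneg hx)
  rwa [sinh_log (by linarith)] at h

lemma log_one_sub_le {s : ℝ} (h₀ : 0 ≤ s) (h₁ : s < 1) : log (1 - s) ≤ -s - s ^ 2 / 2 := by
  have h := sum_le_hasSum (Finset.range 2) (fun n _ => by positivity)
    (hasSum_pow_div_log_of_abs_lt_one (abs_lt.mpr ⟨by linarith, h₁⟩))
  simp only [Finset.sum_range_succ, Finset.range_one, Finset.sum_singleton, zero_add, pow_one,
    CharP.cast_eq_zero, div_one, Nat.cast_one] at h
  linarith

lemma log_sub_log_le_div_sub_sq_div {a b M : ℝ} (ha : 0 < a) (hb : 0 < b) (haM : a ≤ M)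
    (hbM : b ≤ M) :
    log b - log a ≤ (b - a) / a - (b - a) ^ 2 / (2 * M ^ 2) := by
  rw [← log_div hb.ne' ha.ne']
  rcases le_total b a with hba | hab
  · have h := log_one_sub_le (s := (a - b) / a) (by positivity) (by rw [div_lt_one ha]; linarith)
    have hM : (b - a) ^ 2 / (2 * M ^ 2) ≤ (b - a) ^ 2 / (2 * a ^ 2) := by
      gcongr
    calc log (b / a) = log (1 - (a - b) / a) := by congr 1; field_simp; ring
      _ ≤ -((a - b) / a) - ((a - b) / a) ^ 2 / 2 := h
      _ = (b - a) / a - (b - a) ^ 2 / (2 * a ^ 2) := by field_simp; ring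
      _ ≤ _ := by linarith
  · have hM : (b - a) ^ 2 / (2 * M ^ 2) ≤ (b - a) ^ 2 / (2 * (a * b)) := by
      gcongr
      nlinarith
    calc log (b / a) ≤ (b / a - (b / a)⁻¹) / 2 := log_le_sub_inv_div_two ((one_le_div ha).mpr hab)
      _ = (b - a) / a - (b - a) ^ 2 / (2 * (a * b)) := by field_simp; ring
      _ ≤ _ := by linarith

end Real

lemma Finset.sum_Icc_one_le_sub {M : Type*} [AddCommGroup M] [PartialOrder M]
    [IsOrderedAddMonoid M] {f v : ℕ → M} (h : ∀ i, f (i + 1) ≤ v (i + 1) - v i) (N : ℕ) :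
    ∑ n ∈ Finset.Icc 1 N, f n ≤ v N - v 0 := by
  induction N with
  | zero => simp
  | succ N ih =>
    rw [Finset.sum_Icc_succ_top (by omega)]
    simpa using add_le_add ih (h N)

lemma div_sub_sq_div_le {C ε a w S z : ℝ} (hC : 0 < C) (hε : 0 < ε) (ha : ε ≤ a) (hS : 0 ≤ S)
    (hz : 0 ≤ z) (hwSz : w ^ 2 ≤ S * z) :
    w / a - (S + w ^ 2) / (2 * C ^ 2) ≤ C ^ 2 / ε ^ 2 * (z / (1 + z)) := by
  have hquad : 0 ≤ (S + w ^ 2) / (2 * C ^ 2) := by positivity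
  rcases le_or_gt w 0 with hw | hw
  · have : w / a ≤ 0 := div_nonpos_of_nonpos_of_nonneg hw (hε.trans_le ha).le
    have : 0 ≤ C ^ 2 / ε ^ 2 * (z / (1 + z)) := by positivity
    linarith
  have hwa : w / a ≤ w / ε := div_le_div_of_nonneg_left hw.le hε ha
  have hz₀ : 0 < z := by
    by_contra! h
    nlinarith [le_antisymm h hz]
  suffices w / ε - (S + w ^ 2) / (2 * C ^ 2) ≤ C ^ 2 / ε ^ 2 * (z / (1 + z)) by linarith
  rw [div_sub_div _ _ hε.ne' (by positivity), div_le_iff₀ (by positivity)]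
  have : C ^ 2 / ε ^ 2 * (z / (1 + z)) * (ε * (2 * C ^ 2)) = 2 * C ^ 4 * z / (ε * (1 + z)) := by
    field_simp
  rw [this, le_div_iff₀ (by positivity)]
  -- `z` times the gap is `(C²z - ε(1+z)w)² + C⁴z² + ε²(1+z)(Sz - w²)`.
  have key : z * ((w * (2 * C ^ 2) - ε * (S + w ^ 2)) * (ε * (1 + z))) ≤ z * (2 * C ^ 4 * z) := by
    nlinarith [sq_nonneg (C ^ 2 * z - ε * (1 + z) * w), sq_nonneg (C ^ 2 * z),
      mul_nonneg (mul_nonneg (sq_nonneg ε) (by linarith : (0:ℝ) ≤ 1 + z)) (sub_nonneg.mpr hwSz)]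
  exact le_of_mul_le_mul_left key hz₀

section Matrix

variable {ι κ : Type*}

lemma Matrix.det_add_vecMulVec {R : Type*} [CommRing R] [Fintype ι] [DecidableEq ι]
    {A : Matrix ι ι R} (hA : IsUnit A.det) (u v : ι → R) :
    (A + vecMulVec u v).det = A.det * (1 + v ⬝ᵥ A⁻¹ *ᵥ u) := by
  rw [vecMulVec_eq Unit, det_add_replicateCol_mul_replicateRow hA]
  congr 1
  rw [det_unique, add_apply, one_apply_eq, ← replicateRow_vecMul,
    replicateRow_mul_replicateCol_apply, ← dotProduct_mulVec]

lemma Matrix.PosDef.sq_dotProduct_le [Fintype ι] [DecidableEq ι] {V : Matrix ι ι ℝ} (hV : V.PosDef)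
    (u y : ι → ℝ) : (u ⬝ᵥ y) ^ 2 ≤ (u ⬝ᵥ V *ᵥ u) * (y ⬝ᵥ V⁻¹ *ᵥ y) := by
  let := V.toSeminormedAddCommGroup hV.posSemidef
  let := V.toInnerProductSpace hV.posSemidef
  have hVV : V *ᵥ V⁻¹ *ᵥ y = y := by
    rw [mulVec_mulVec, mul_nonsing_inv _ hV.det_pos.ne'.isUnit, one_mulVec]
  have h := real_inner_mul_inner_self_le u (V⁻¹ *ᵥ y)
  change ((V *ᵥ V⁻¹ *ᵥ y) ⬝ᵥ star u) * ((V *ᵥ V⁻¹ *ᵥ y) ⬝ᵥ star u) ≤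
    ((V *ᵥ u) ⬝ᵥ star u) * ((V *ᵥ V⁻¹ *ᵥ y) ⬝ᵥ star (V⁻¹ *ᵥ y)) at h
  simp only [hVV, star_trivial] at h
  rwa [sq, dotProduct_comm u y, dotProduct_comm u (V *ᵥ u)]

def scatterMatrix (s : Finset κ) (x : κ → ι → ℝ) : Matrix ι ι ℝ :=
  ∑ k ∈ s, vecMulVec (x k) (x k)

lemma scatterMatrix_insert [DecidableEq κ] {s : Finset κ} {m : κ} (hm : m ∉ s)
    (x : κ → ι → ℝ) : scatterMatrix (insert m s) x = scatterMatrix s x + vecMulVec (x m) (x m) := by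
  rw [scatterMatrix, Finset.sum_insert hm, add_comm, scatterMatrix]

lemma dotProduct_scatterMatrix_mulVec [Fintype ι] (s : Finset κ) (x : κ → ι → ℝ) (u : ι → ℝ) :
    u ⬝ᵥ scatterMatrix s x *ᵥ u = ∑ k ∈ s, (u ⬝ᵥ x k) ^ 2 := by
  simp only [scatterMatrix, sum_mulVec, dotProduct_sum, vecMulVec_mulVec, op_smul_eq_smul,
    dotProduct_smul, smul_eq_mul, dotProduct_comm (x _) u, sq]

lemma posDef_scatterMatrix [Fintype ι] {s : Finset κ} {x : κ → ι → ℝ}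
    (hs : Submodule.span ℝ (x '' s) = ⊤) : (scatterMatrix s x).PosDef := by
  have hsemi : (scatterMatrix s x).PosSemidef :=
    posSemidef_sum s fun k _ => by simpa using posSemidef_vecMulVec_self_star (x k)
  refine .of_dotProduct_mulVec_pos hsemi.isHermitian fun u hu => ?_
  rw [star_trivial, dotProduct_scatterMatrix_mulVec]
  refine (Finset.sum_nonneg fun k _ => sq_nonneg _).lt_of_ne fun h => hu ?_
  have horth : x '' s ⊆ LinearMap.ker (dotProductBilin ℝ ℝ u) := by
    rintro _ ⟨k, hk, rfl⟩
    have := (Finset.sum_eq_zero_iff_of_nonneg fun k _ => sq_nonneg (u ⬝ᵥ x k)).mp h.symm k hk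
    exact pow_eq_zero_iff two_ne_zero |>.mp this
  have : u ⬝ᵥ u = 0 := (Submodule.span_le.mpr horth) (hs ▸ Submodule.mem_top)
  exact dotProduct_self_eq_zero.mp this

end Matrix

section Bounds

variable {ι : Type*} [Fintype ι]

lemma le_one_add_dotProduct_of_mem_convexHull {D : Set (ι → ℝ)} {α z : ι → ℝ} {c : ℝ}
    (hD : ∀ y ∈ D, c ≤ 1 + α ⬝ᵥ y) (hz : z ∈ convexHull ℝ D) : c ≤ 1 + α ⬝ᵥ z := by
  have hconv : Convex ℝ {z : ι → ℝ | c - 1 ≤ α ⬝ᵥ z} :=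
    convex_halfSpace_ge (dotProductBilin ℝ ℝ α).isLinear (c - 1)
  have := convexHull_min (fun y hy => show c - 1 ≤ α ⬝ᵥ y by linarith [hD y hy]) hconv hz
  exact sub_le_iff_le_add'.mp this

lemma abs_dotProduct_le_of_ball_subset {K : Set (ι → ℝ)} {ρ : ℝ} (hρ : 0 < ρ)
    (hK : Metric.ball 0 ρ ⊆ K) {α : ι → ℝ} (hα : ∀ z ∈ K, 0 ≤ 1 + α ⬝ᵥ z) (y : ι → ℝ) :
    |α ⬝ᵥ y| ≤ 2 * ‖y‖ / ρ := by
  rcases eq_or_ne y 0 with rfl | hy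
  · simp
  set t := ρ / (2 * ‖y‖)
  have ht : 0 < t := by positivity
  have hnorm : ‖t • y‖ < ρ := by
    have : t * ‖y‖ = ρ / 2 := by simp only [t]; field_simp
    rw [norm_smul, Real.norm_of_nonneg ht.le, this]
    linarith
  have h₁ := hα _ (hK (mem_ball_zero_iff.mpr hnorm))
  have h₂ := hα _ (hK (mem_ball_zero_iff.mpr ((norm_neg (t • y)).trans_lt hnorm)))
  rw [dotProduct_smul, smul_eq_mul] at h₁
  rw [dotProduct_neg, dotProduct_smul, smul_eq_mul] at h₂
  have ht' : 2 * ‖y‖ / ρ = t⁻¹ := by simp only [t, inv_div]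
  rw [ht', abs_le]
  constructor <;> nlinarith [mul_inv_cancel₀ ht.ne', inv_pos.mpr ht]

lemma bddAbove_one_add_dotProduct {K B : Set (ι → ℝ)} (hK : (0 : ι → ℝ) ∈ interior K)
    (hB : Bornology.IsBounded B) :
    BddAbove {r : ℝ | ∃ α : ι → ℝ, ∃ y ∈ B, (∀ z ∈ K, 0 ≤ 1 + α ⬝ᵥ z) ∧ r = 1 + α ⬝ᵥ y} := by
  obtain ⟨ρ, hρ, hball⟩ := Metric.mem_nhds_iff.mp (mem_interior_iff_mem_nhds.mp hK)
  obtain ⟨R, hR⟩ := hB.exists_norm_le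
  refine ⟨1 + 2 * R / ρ, ?_⟩
  rintro _ ⟨α, y, hy, hα, rfl⟩
  have := (le_abs_self _).trans (abs_dotProduct_le_of_ball_subset hρ hball hα y)
  have : 2 * ‖y‖ / ρ ≤ 2 * R / ρ := by gcongr; exact hR y hy
  linarith

lemma bddAbove_one_add_dotProduct_Icc {K P : Set (ι → ℝ)} (hK : (0 : ι → ℝ) ∈ interior K)
    (hP : ∀ α ∈ P, ∀ z ∈ K, 0 ≤ 1 + α ⬝ᵥ z) (x : ℤ → ι → ℝ) (a b : ℤ) :
    BddAbove {r : ℝ | ∃ α ∈ P, ∃ n : ℤ, a ≤ n ∧ n ≤ b ∧ r = 1 + α ⬝ᵥ x n} := by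
  refine (bddAbove_one_add_dotProduct hK ((Set.finite_Icc a b).image x).isBounded).mono ?_
  rintro _ ⟨α, hα, n, h₁, h₂, rfl⟩
  exact ⟨α, x n, ⟨n, ⟨h₁, h₂⟩, rfl⟩, hP α hα, rfl⟩

end Bounds

section OneStep

variable {ι κ : Type*} [Fintype ι] [DecidableEq κ] {x : κ → ι → ℝ} {s : Finset κ} {m : κ}
  {g h : ι → ℝ} {C : ℝ}

lemma sum_log_sub_le_of_sum_inv_smul_eq_zero (hm : m ∉ s)
    (hfoc : ∑ k ∈ s, (1 + g ⬝ᵥ x k)⁻¹ • x k = 0)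
    (hg : ∀ k ∈ insert m s, 1 + g ⬝ᵥ x k ∈ Set.Ioc 0 C)
    (hh : ∀ k ∈ insert m s, 1 + h ⬝ᵥ x k ∈ Set.Ioc 0 C) :
    ∑ k ∈ insert m s, (Real.log (1 + h ⬝ᵥ x k) - Real.log (1 + g ⬝ᵥ x k)) ≤
      (h - g) ⬝ᵥ x m / (1 + g ⬝ᵥ x m) -
        ((h - g) ⬝ᵥ scatterMatrix s x *ᵥ (h - g) + ((h - g) ⬝ᵥ x m) ^ 2) / (2 * C ^ 2) := by
  set u := h - g
  have htaylor : ∀ k ∈ insert m s, Real.log (1 + h ⬝ᵥ x k) - Real.log (1 + g ⬝ᵥ x k) ≤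
      u ⬝ᵥ x k / (1 + g ⬝ᵥ x k) - (u ⬝ᵥ x k) ^ 2 / (2 * C ^ 2) := fun k hk => by
    have hu : 1 + h ⬝ᵥ x k - (1 + g ⬝ᵥ x k) = u ⬝ᵥ x k := by simp only [u, sub_dotProduct]; ring
    simpa only [hu] using
      Real.log_sub_log_le_div_sub_sq_div (hg k hk).1 (hh k hk).1 (hg k hk).2 (hh k hk).2
  have hgrad : ∑ k ∈ s, u ⬝ᵥ x k / (1 + g ⬝ᵥ x k) = 0 := by
    simpa [dotProduct_sum, dotProduct_smul, div_eq_inv_mul] using congrArg (u ⬝ᵥ ·) hfoc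
  calc _ ≤ ∑ k ∈ insert m s, (u ⬝ᵥ x k / (1 + g ⬝ᵥ x k) - (u ⬝ᵥ x k) ^ 2 / (2 * C ^ 2)) :=
        Finset.sum_le_sum htaylor
    _ = _ := by
      rw [Finset.sum_sub_distrib, ← Finset.sum_div, Finset.sum_insert hm, Finset.sum_insert hm,
        hgrad, dotProduct_scatterMatrix_mulVec]
      ring

lemma sum_log_sub_le_mul_log_det_sub [DecidableEq ι] {ε : ℝ} (hm : m ∉ s)
    (hfoc : ∑ k ∈ s, (1 + g ⬝ᵥ x k)⁻¹ • x k = 0)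
    (hg : ∀ k ∈ insert m s, 1 + g ⬝ᵥ x k ∈ Set.Ioc 0 C)
    (hh : ∀ k ∈ insert m s, 1 + h ⬝ᵥ x k ∈ Set.Ioc 0 C)
    (hε : 0 < ε) (hεm : ε ≤ 1 + g ⬝ᵥ x m) (hV : (scatterMatrix s x).PosDef) :
    ∑ k ∈ insert m s, (Real.log (1 + h ⬝ᵥ x k) - Real.log (1 + g ⬝ᵥ x k)) ≤
      C ^ 2 / ε ^ 2 * (Real.log (scatterMatrix (insert m s) x).det -
        Real.log (scatterMatrix s x).det) := by
  set V := scatterMatrix s x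
  set z := x m ⬝ᵥ V⁻¹ *ᵥ x m
  have hz : 0 ≤ z := by simpa using hV.inv.posSemidef.dotProduct_mulVec_nonneg (x m)
  have hS : 0 ≤ (h - g) ⬝ᵥ V *ᵥ (h - g) := by
    simpa using hV.posSemidef.dotProduct_mulVec_nonneg (h - g)
  have hC : 0 < C := (hg m (s.mem_insert_self m)).1.trans_le (hg m (s.mem_insert_self m)).2
  have hdet : Real.log (scatterMatrix (insert m s) x).det - Real.log V.det = Real.log (1 + z) := by
    rw [scatterMatrix_insert hm, det_add_vecMulVec hV.det_pos.ne'.isUnit,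
      Real.log_mul hV.det_pos.ne' (by positivity)]
    ring
  have hlog : z / (1 + z) ≤ Real.log (1 + z) := by
    convert Real.one_sub_inv_le_log_of_pos (by positivity : 0 < 1 + z) using 1
    field_simp
    ring
  calc _ ≤ (h - g) ⬝ᵥ x m / (1 + g ⬝ᵥ x m) -
        ((h - g) ⬝ᵥ V *ᵥ (h - g) + ((h - g) ⬝ᵥ x m) ^ 2) / (2 * C ^ 2) :=
        sum_log_sub_le_of_sum_inv_smul_eq_zero hm hfoc hg hh
    _ ≤ C ^ 2 / ε ^ 2 * (z / (1 + z)) := div_sub_sq_div_le hC hε hεm hS hz (hV.sq_dotProduct_le _ _)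
    _ ≤ C ^ 2 / ε ^ 2 * Real.log (1 + z) := by gcongr
    _ = _ := by rw [hdet]

end OneStep

theorem sum_delta_phi_le_logdet_diff_general
    (d : ℕ)
    (D : Set (Fin d → ℝ)) (hDcpt : IsCompact D)
    (hD0 : (0 : Fin d → ℝ) ∈ interior (convexHull ℝ D))
    (ε₀ : ℝ) (hε₀ : 0 < ε₀ ∧ ε₀ < 1)
    (n₀ : ℕ)
    (x : ℤ → Fin d → ℝ)
    (hpath : ∀ n : ℤ, 1 ≤ n → x n ∈ D)
    (hspan : Submodule.span ℝ (x '' Set.Icc (-(n₀ : ℤ) + 1) 0) = ⊤)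
    (htrain : ∀ α : Fin d → ℝ,
        (∀ n : ℤ, -(n₀ : ℤ) + 1 ≤ n → n ≤ 0 → 0 ≤ 1 + α ⬝ᵥ x n) →
        ∀ y ∈ D, ε₀ ≤ 1 + α ⬝ᵥ y)
    (Φ : ℕ → (Fin d → ℝ) → ℝ)
    (hΦ : ∀ N α, Φ N α =
        ∑ n ∈ Finset.Icc (-(n₀ : ℤ) + 1) (N : ℤ), Real.log (1 + α ⬝ᵥ x n))
    (αs : ℕ → Fin d → ℝ)
    (hαpos : ∀ N : ℕ, ∀ n : ℤ, -(n₀ : ℤ) + 1 ≤ n → n ≤ 0 → 0 < 1 + αs N ⬝ᵥ x n)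
    (hfoc : ∀ N : ℕ,
        ∑ n ∈ Finset.Icc (-(n₀ : ℤ) + 1) (N : ℤ), (1 + αs N ⬝ᵥ x n)⁻¹ • x n = 0)
    -- the set `P` of proportions respecting the collateral duty on the training data
    (P : Set (Fin d → ℝ))
    (hP : P = {α : Fin d → ℝ | ∀ n : ℤ, -(n₀ : ℤ) + 1 ≤ n → n ≤ 0 → 0 ≤ 1 + α ⬝ᵥ x n})
    -- the constant `C₁` of (3.4)
    (C₁ : ℝ)
    (hC₁ : C₁ = max
        (sSup {r : ℝ | ∃ α : Fin d → ℝ, ∃ y ∈ D,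
          (∀ z ∈ convexHull ℝ D, 0 ≤ 1 + α ⬝ᵥ z) ∧ r = 1 + α ⬝ᵥ y})
        (sSup {r : ℝ | ∃ α ∈ P, ∃ n : ℤ, -(n₀ : ℤ) + 1 ≤ n ∧ n ≤ 0 ∧ r = 1 + α ⬝ᵥ x n}))
    -- `V_{0,N}` including the training data
    (V₀ : ℕ → Matrix (Fin d) (Fin d) ℝ)
    (hV₀ : ∀ N : ℕ, V₀ N = ∑ n ∈ Finset.Icc (-(n₀ : ℤ) + 1) (N : ℤ),
        vecMulVec (x n) (x n)) :
    ∀ N : ℕ, 1 ≤ N →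
      ∑ n ∈ Finset.Icc 1 N, (Φ n (αs n) - Φ n (αs (n - 1))) ≤
        (C₁ ^ 2 / ε₀ ^ 2) * (Real.log (V₀ N).det - Real.log (V₀ 0).det) := by
  subst hP
  have hαP (N : ℕ) : ∀ n : ℤ, -(n₀ : ℤ) + 1 ≤ n → n ≤ 0 → 0 ≤ 1 + αs N ⬝ᵥ x n :=
    fun n h₁ h₂ => (hαpos N n h₁ h₂).le
  have hhull (α : Fin d → ℝ) (hα : ∀ n : ℤ, -(n₀ : ℤ) + 1 ≤ n → n ≤ 0 → 0 ≤ 1 + α ⬝ᵥ x n) :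
      ∀ z ∈ convexHull ℝ D, 0 ≤ 1 + α ⬝ᵥ z := fun _ hz =>
    hε₀.1.le.trans (le_one_add_dotProduct_of_mem_convexHull (htrain α hα) hz)
  have hrange (N : ℕ) (k : ℤ) (hk : -(n₀ : ℤ) + 1 ≤ k) : 1 + αs N ⬝ᵥ x k ∈ Set.Ioc 0 C₁ := by
    rw [hC₁]
    rcases le_or_gt k 0 with hk₀ | hk₀
    · exact ⟨hαpos N k hk hk₀, le_max_of_le_right <|
        le_csSup (bddAbove_one_add_dotProduct_Icc hD0 hhull x _ _) ⟨αs N, hαP N, k, hk, hk₀, rfl⟩⟩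
    · exact ⟨hε₀.1.trans_le (htrain _ (hαP N) _ (hpath k hk₀)), le_max_of_le_left <|
        le_csSup (bddAbove_one_add_dotProduct hD0 hDcpt.isBounded)
          ⟨αs N, x k, hpath k hk₀, hhull _ (hαP N), rfl⟩⟩
  have hV (N : ℕ) : (scatterMatrix (Finset.Icc (-(n₀ : ℤ) + 1) N) x).PosDef := by
    refine posDef_scatterMatrix (eq_top_mono (Submodule.span_mono (Set.image_mono ?_)) hspan)
    rw [Finset.coe_Icc]
    exact Set.Icc_subset_Icc_right (by positivity)
  have hstep (i : ℕ) : Φ (i + 1) (αs (i + 1)) - Φ (i + 1) (αs i) ≤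
      C₁ ^ 2 / ε₀ ^ 2 * (Real.log (V₀ (i + 1)).det - Real.log (V₀ i).det) := by
    have hIcc : Finset.Icc (-(n₀ : ℤ) + 1) ((i + 1 : ℕ) : ℤ) =
        insert ((i : ℤ) + 1) (Finset.Icc (-(n₀ : ℤ) + 1) i) := by
      rw [Nat.cast_succ, Finset.insert_Icc_right_eq_Icc_add_one (by omega)]
    have hmem {k : ℤ} (hk : k ∈ insert ((i : ℤ) + 1) (Finset.Icc (-(n₀ : ℤ) + 1) i)) :
        -(n₀ : ℤ) + 1 ≤ k := (Finset.mem_Icc.mp (hIcc ▸ hk)).1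
    rw [hΦ, hΦ, hV₀, hV₀, ← Finset.sum_sub_distrib, hIcc]
    exact sum_log_sub_le_mul_log_det_sub (by simp) (hfoc i) (fun k hk => hrange i k (hmem hk))
      (fun k hk => hrange (i + 1) k (hmem hk)) hε₀.1
      (htrain _ (hαP i) _ (hpath _ (by omega))) (hV i)
  rintro N -
  rw [mul_sub]
  exact Finset.sum_Icc_one_le_sub (v := fun n => C₁ ^ 2 / ε₀ ^ 2 * Real.log (V₀ n).det)
    (fun i => (hstep i).trans_eq (mul_sub _ _ _)) N

/-- Lemma 3.2: for every path and every `N ≥ 1`,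
`Σ_{n=1}^N ΔΦ_n ≤ C₂ (log|V_{0,N}| − log|V_{0,0}|)` with `C₂ = C₁²/ε₀²`, where
`ΔΦ_n = Φ_{0,n}(α_n^*) − Φ_{0,n}(α_{n-1}^*)` and `V_{0,N} = Σ_{n=-n₀+1}^N x_n x_nᵗ`. -/
theorem sum_delta_phi_le_logdet_diff
    (d : ℕ) (hd : 1 ≤ d)
    (D : Set (Fin d → ℝ)) (hDcpt : IsCompact D)
    (hD0 : (0 : Fin d → ℝ) ∈ interior (convexHull ℝ D))
    (ε₀ : ℝ) (hε₀ : 0 < ε₀ ∧ ε₀ < 1)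
    (n₀ : ℕ) (hn₀ : d + 1 ≤ n₀)
    (x : ℤ → Fin d → ℝ)
    (hpath : ∀ n : ℤ, 1 ≤ n → x n ∈ D)
    (hspan : Submodule.span ℝ (x '' Set.Icc (-(n₀ : ℤ) + 1) 0) = ⊤)
    (htrain : ∀ α : Fin d → ℝ,
        (∀ n : ℤ, -(n₀ : ℤ) + 1 ≤ n → n ≤ 0 → 0 ≤ 1 + α ⬝ᵥ x n) →
        ∀ y ∈ D, ε₀ ≤ 1 + α ⬝ᵥ y)
    (Φ : ℕ → (Fin d → ℝ) → ℝ)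
    (hΦ : ∀ N α, Φ N α =
        ∑ n ∈ Finset.Icc (-(n₀ : ℤ) + 1) (N : ℤ), Real.log (1 + α ⬝ᵥ x n))
    (αs : ℕ → Fin d → ℝ)
    (hαpos : ∀ N : ℕ, ∀ n : ℤ, -(n₀ : ℤ) + 1 ≤ n → n ≤ 0 → 0 < 1 + αs N ⬝ᵥ x n)
    (hαmax : ∀ N : ℕ, ∀ α : Fin d → ℝ,
        (∀ n : ℤ, -(n₀ : ℤ) + 1 ≤ n → n ≤ 0 → 0 ≤ 1 + α ⬝ᵥ x n) →
        Φ N α ≤ Φ N (αs N))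
    (hfoc : ∀ N : ℕ,
        ∑ n ∈ Finset.Icc (-(n₀ : ℤ) + 1) (N : ℤ), (1 + αs N ⬝ᵥ x n)⁻¹ • x n = 0)
    -- the set `P` of proportions respecting the collateral duty on the training data
    (P : Set (Fin d → ℝ))
    (hP : P = {α : Fin d → ℝ | ∀ n : ℤ, -(n₀ : ℤ) + 1 ≤ n → n ≤ 0 → 0 ≤ 1 + α ⬝ᵥ x n})
    -- the constant `C₁` of (3.4)
    (C₁ : ℝ)
    (hC₁ : C₁ = max
        (sSup {r : ℝ | ∃ α : Fin d → ℝ, ∃ y ∈ D,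
          (∀ z ∈ convexHull ℝ D, 0 ≤ 1 + α ⬝ᵥ z) ∧ r = 1 + α ⬝ᵥ y})
        (sSup {r : ℝ | ∃ α ∈ P, ∃ n : ℤ, -(n₀ : ℤ) + 1 ≤ n ∧ n ≤ 0 ∧ r = 1 + α ⬝ᵥ x n}))
    -- `V_{0,N}` including the training data
    (V₀ : ℕ → Matrix (Fin d) (Fin d) ℝ)
    (hV₀ : ∀ N : ℕ, V₀ N = ∑ n ∈ Finset.Icc (-(n₀ : ℤ) + 1) (N : ℤ),
        vecMulVec (x n) (x n)) :
    ∀ N : ℕ, 1 ≤ N →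
      ∑ n ∈ Finset.Icc 1 N, (Φ n (αs n) - Φ n (αs (n - 1))) ≤
        (C₁ ^ 2 / ε₀ ^ 2) * (Real.log (V₀ N).det - Real.log (V₀ 0).det) :=
  sum_delta_phi_le_logdet_diff_general d D hDcpt hD0 ε₀ hε₀ n₀ x hpath hspan htrain Φ hΦ αs hαpos
    hfoc P hP C₁ hC₁ V₀ hV₀
end

section
/- For every path x₁, x₂, … ∈ D and every n ≥ 1, ΔΦ_n = Φ_{0,n}(α_n^*) − Φ_{0,n}(α_{n-1}^*) ≤ log( 1 + x_n(α_n^*)ᵗ V_{0,n-1}(α_{n-1}^*, α_n^*)⁻¹ x_n(α_{n-1}^*) ), where x_n(α) = x_n/(1+α·x_n) and V_{0,n-1}(α,β) = Σ_{i=-n₀+1}^{n-1} x_i x_iᵗ / ((1+α·x_i)(1+β·x_i)) is symmetric positive definite. -/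
/-!
Write `α = α_{n-1}^*`, `β = α_n^*`. Splitting off the last summand,
`ΔΦ_n = (Φ_{0,n-1}(β) - Φ_{0,n-1}(α)) + log (1 + β·x_n) - log (1 + α·x_n)`, and the bracket is
`≤ 0` because `α` maximises `Φ_{0,n-1}`. The secant matrix `V = V_{0,n-1}(α, β)` satisfies
`V (β - α) = ∇Φ_{0,n-1}(α) - ∇Φ_{0,n-1}(β)`, and the first-order conditions at times `n - 1` and
`n` turn the right-hand side into `x_n(β)`. So `V⁻¹ x_n(β) = β - α`, and the quadratic form in the
bound equals `(1 + β·x_n) / (1 + α·x_n) - 1`. The spanning training vectors make `V` positive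
definite, so `V⁻¹` is a true inverse.
-/

open Matrix

theorem Finset.sum_Icc_add_one_right {α M : Type*} [LinearOrder α] [One α] [LocallyFiniteOrder α]
    [Add α] [SuccAddOrder α] [NoMaxOrder α] [AddCommMonoid M] {a b : α} (h : a ≤ b + 1)
    (f : α → M) : ∑ i ∈ Icc a (b + 1), f i = ∑ i ∈ Icc a b, f i + f (b + 1) := by
  have hb : b + 1 ∉ Icc a b := fun hmem =>
    (Order.lt_add_one_iff.2 le_rfl).not_ge (mem_Icc.1 hmem).2
  rw [← insert_Icc_right_eq_Icc_add_one h, sum_insert hb, add_comm]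

section Gram

variable {ι m : Type*} [Fintype m]

theorem dotProduct_sum_smul_vecMulVec_self_mulVec (s : Finset ι) (w : ι → ℝ)
    (v : ι → m → ℝ) (u : m → ℝ) :
    u ⬝ᵥ (∑ i ∈ s, w i • vecMulVec (v i) (v i)) *ᵥ u = ∑ i ∈ s, w i * (v i ⬝ᵥ u) ^ 2 := by
  rw [sum_mulVec, dotProduct_sum]
  refine Finset.sum_congr rfl fun i _ => ?_
  rw [smul_mulVec, vecMulVec_mulVec, op_smul_eq_smul, smul_smul, dotProduct_smul, smul_eq_mul,
    dotProduct_comm u]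
  ring

theorem posDef_sum_smul_vecMulVec_self {s : Finset ι} {w : ι → ℝ} {v : ι → m → ℝ}
    (hw : ∀ i ∈ s, 0 < w i) (hspan : Submodule.span ℝ (v '' s) = ⊤) :
    (∑ i ∈ s, w i • vecMulVec (v i) (v i)).PosDef := by
  have hpsd : (∑ i ∈ s, w i • vecMulVec (v i) (v i)).PosSemidef :=
    posSemidef_sum s fun i hi => by
      simpa using (posSemidef_vecMulVec_self_star (v i)).smul (hw i hi).le
  refine posDef_iff_dotProduct_mulVec.2 ⟨hpsd.isHermitian, fun u hu => ?_⟩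
  obtain ⟨i, hi, hiu⟩ : ∃ i ∈ s, v i ⬝ᵥ u ≠ 0 := by
    by_contra! h
    have hu0 : (dotProductBilin ℝ ℝ).flip u = 0 :=
      LinearMap.ext_on hspan fun _ ⟨j, hj, hju⟩ => by simpa [← hju] using h j hj
    exact hu (dotProduct_self_eq_zero.1 (by simpa using LinearMap.congr_fun hu0 u))
  rw [star_trivial, dotProduct_sum_smul_vecMulVec_self_mulVec]
  refine Finset.sum_pos' (fun j hj => ?_) ⟨i, hi, ?_⟩
  · have := hw j hj; positivity
  · have := hw i hi; positivity

end Gram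

section LogSum

variable {ι m : Type*} [Fintype m] (s : Finset ι) (x : ι → m → ℝ)

noncomputable def logSumGradient (α : m → ℝ) : m → ℝ := ∑ i ∈ s, (1 + α ⬝ᵥ x i)⁻¹ • x i

noncomputable def logSumSecantMatrix (α β : m → ℝ) : Matrix m m ℝ :=
  ∑ i ∈ s, ((1 + α ⬝ᵥ x i) * (1 + β ⬝ᵥ x i))⁻¹ • vecMulVec (x i) (x i)

variable {s x}

theorem logSumSecantMatrix_mulVec_sub {α β : m → ℝ} (hα : ∀ i ∈ s, 1 + α ⬝ᵥ x i ≠ 0)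
    (hβ : ∀ i ∈ s, 1 + β ⬝ᵥ x i ≠ 0) :
    logSumSecantMatrix s x α β *ᵥ (β - α) = logSumGradient s x α - logSumGradient s x β := by
  rw [logSumSecantMatrix, logSumGradient, logSumGradient, sum_mulVec, ← Finset.sum_sub_distrib]
  refine Finset.sum_congr rfl fun i hi => ?_
  have hx : x i ⬝ᵥ (β - α) = (1 + β ⬝ᵥ x i) - (1 + α ⬝ᵥ x i) := by
    rw [dotProduct_sub, dotProduct_comm, dotProduct_comm (x i)]; ring
  rw [smul_mulVec, vecMulVec_mulVec, op_smul_eq_smul, hx, smul_smul, ← sub_smul]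
  congr 1
  field_simp [hα i hi, hβ i hi]

theorem posDef_logSumSecantMatrix {α β : m → ℝ} (hα : ∀ i ∈ s, 0 < 1 + α ⬝ᵥ x i)
    (hβ : ∀ i ∈ s, 0 < 1 + β ⬝ᵥ x i) (hspan : Submodule.span ℝ (x '' s) = ⊤) :
    (logSumSecantMatrix s x α β).PosDef :=
  posDef_sum_smul_vecMulVec_self (fun i hi => inv_pos.2 (mul_pos (hα i hi) (hβ i hi))) hspan

end LogSum

theorem one_add_smul_dotProduct_inv_mulVec_smul {m : Type*} [Fintype m] [DecidableEq m]
    {V : Matrix m m ℝ} (hV : IsUnit V.det) {y δ : m → ℝ} {a b : ℝ} (ha : a ≠ 0) (hb : b ≠ 0)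
    (hyδ : y ⬝ᵥ δ = b - a) (hVδ : V *ᵥ δ = b⁻¹ • y) :
    1 + (b⁻¹ • y) ⬝ᵥ V⁻¹ *ᵥ (a⁻¹ • y) = b / a := by
  have hVinv : V⁻¹ *ᵥ (b⁻¹ • y) = δ := by
    rw [← hVδ, mulVec_mulVec, nonsing_inv_mul V hV, one_mulVec]
  have hy : a⁻¹ • y = (b / a) • (b⁻¹ • y) := by
    rw [smul_smul]; field_simp
  rw [hy, mulVec_smul, hVinv, smul_dotProduct, dotProduct_smul, hyδ, smul_eq_mul, smul_eq_mul]
  field_simp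
  ring

theorem delta_phi_upper_bound_general
    (d : ℕ)
    (D : Set (Fin d → ℝ))
    (ε₀ : ℝ) (hε₀ : 0 < ε₀ ∧ ε₀ < 1)
    (n₀ : ℕ)
    (x : ℤ → Fin d → ℝ)
    (hpath : ∀ n : ℤ, 1 ≤ n → x n ∈ D)
    (hspan : Submodule.span ℝ (x '' Set.Icc (-(n₀ : ℤ) + 1) 0) = ⊤)
    (htrain : ∀ α : Fin d → ℝ,
        (∀ n : ℤ, -(n₀ : ℤ) + 1 ≤ n → n ≤ 0 → 0 ≤ 1 + α ⬝ᵥ x n) →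
        ∀ y ∈ D, ε₀ ≤ 1 + α ⬝ᵥ y)
    (Φ : ℕ → (Fin d → ℝ) → ℝ)
    (hΦ : ∀ N α, Φ N α =
        ∑ n ∈ Finset.Icc (-(n₀ : ℤ) + 1) (N : ℤ), Real.log (1 + α ⬝ᵥ x n))
    (αs : ℕ → Fin d → ℝ)
    (hαpos : ∀ N : ℕ, ∀ n : ℤ, -(n₀ : ℤ) + 1 ≤ n → n ≤ 0 → 0 < 1 + αs N ⬝ᵥ x n)
    (hαmax : ∀ N : ℕ, ∀ α : Fin d → ℝ,
        (∀ n : ℤ, -(n₀ : ℤ) + 1 ≤ n → n ≤ 0 → 0 ≤ 1 + α ⬝ᵥ x n) →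
        Φ N α ≤ Φ N (αs N))
    (hfoc : ∀ N : ℕ,
        ∑ n ∈ Finset.Icc (-(n₀ : ℤ) + 1) (N : ℤ), (1 + αs N ⬝ᵥ x n)⁻¹ • x n = 0) :
    ∀ n : ℕ, 1 ≤ n →
      Φ n (αs n) - Φ n (αs (n - 1)) ≤
        Real.log (1 +
          ((1 + αs n ⬝ᵥ x (n : ℤ))⁻¹ • x (n : ℤ)) ⬝ᵥ
            (∑ i ∈ Finset.Icc (-(n₀ : ℤ) + 1) ((n : ℤ) - 1),
              ((1 + αs (n - 1) ⬝ᵥ x i) * (1 + αs n ⬝ᵥ x i))⁻¹ •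
                vecMulVec (x i) (x i))⁻¹.mulVec
            ((1 + αs (n - 1) ⬝ᵥ x (n : ℤ))⁻¹ • x (n : ℤ))) := by
  have hpos (N : ℕ) (i : ℤ) (hi : -(n₀ : ℤ) + 1 ≤ i) : 0 < 1 + αs N ⬝ᵥ x i := by
    rcases le_or_gt i 0 with h | h
    · exact hαpos N i hi h
    · exact hε₀.1.trans_le <| htrain _ (fun j hj hj' => (hαpos N j hj hj').le) _ (hpath i h)
  rintro n hn
  obtain ⟨k, rfl⟩ := Nat.exists_eq_add_of_le' hn
  have hk : -(n₀ : ℤ) + 1 ≤ k + 1 := by omega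
  rw [Nat.add_sub_cancel]
  push_cast
  rw [add_sub_cancel_right]
  set S := Finset.Icc (-(n₀ : ℤ) + 1) k
  set α := αs k
  set β := αs (k + 1)
  set y := x (k + 1)
  have hSpos (N : ℕ) : ∀ i ∈ S, 0 < 1 + αs N ⬝ᵥ x i := fun i hi =>
    hpos N i (Finset.mem_Icc.1 hi).1
  have hsplit (γ : Fin d → ℝ) : Φ (k + 1) γ = Φ k γ + Real.log (1 + γ ⬝ᵥ y) := by
    rw [hΦ, hΦ]; push_cast; exact Finset.sum_Icc_add_one_right hk _
  have hgradβ : logSumGradient S x β = -((1 + β ⬝ᵥ y)⁻¹ • y) := by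
    have := hfoc (k + 1)
    push_cast at this
    rw [Finset.sum_Icc_add_one_right hk] at this
    exact eq_neg_of_add_eq_zero_left this
  have hsecant : logSumSecantMatrix S x α β *ᵥ (β - α) = (1 + β ⬝ᵥ y)⁻¹ • y := by
    rw [logSumSecantMatrix_mulVec_sub (fun i hi => (hSpos k i hi).ne')
      (fun i hi => (hSpos (k + 1) i hi).ne'), hgradβ,
      show logSumGradient S x α = 0 from hfoc k, zero_sub, neg_neg]
  have hspanS : Submodule.span ℝ (x '' S) = ⊤ := by
    refine top_unique (hspan ▸ Submodule.span_mono (Set.image_mono ?_))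
    rw [Finset.coe_Icc]
    exact Set.Icc_subset_Icc le_rfl (by omega)
  have hdet : IsUnit (logSumSecantMatrix S x α β).det :=
    (posDef_logSumSecantMatrix (hSpos k) (hSpos (k + 1)) hspanS).det_pos.ne'.isUnit
  have hyδ : y ⬝ᵥ (β - α) = (1 + β ⬝ᵥ y) - (1 + α ⬝ᵥ y) := by
    rw [dotProduct_sub, dotProduct_comm, dotProduct_comm y]; ring
  have hα := hpos k (k + 1) hk
  have hβ := hpos (k + 1) (k + 1) hk
  calc Φ (k + 1) β - Φ (k + 1) α ≤ Real.log (1 + β ⬝ᵥ y) - Real.log (1 + α ⬝ᵥ y) := by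
        rw [hsplit, hsplit]
        linarith [hαmax k β fun j hj hj' => (hαpos _ j hj hj').le]
    _ = Real.log ((1 + β ⬝ᵥ y) / (1 + α ⬝ᵥ y)) := (Real.log_div hβ.ne' hα.ne').symm
    _ = _ := by
      rw [← one_add_smul_dotProduct_inv_mulVec_smul hdet hα.ne' hβ.ne' hyδ hsecant]
      rfl

/-- Inequality (3.2): for every path and every `n ≥ 1`,
`ΔΦ_n ≤ log(1 + x_n(α_n^*)ᵗ V_{0,n-1}(α_{n-1}^*, α_n^*)⁻¹ x_n(α_{n-1}^*))`,
where `x_n(α) = x_n/(1+α·x_n)` and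
`V_{0,n-1}(α,β) = Σ_{i=-n₀+1}^{n-1} x_i x_iᵗ/((1+α·x_i)(1+β·x_i))`. -/
theorem delta_phi_upper_bound
    (d : ℕ) (hd : 1 ≤ d)
    (D : Set (Fin d → ℝ)) (hDcpt : IsCompact D)
    (hD0 : (0 : Fin d → ℝ) ∈ interior (convexHull ℝ D))
    (ε₀ : ℝ) (hε₀ : 0 < ε₀ ∧ ε₀ < 1)
    (n₀ : ℕ) (hn₀ : d + 1 ≤ n₀)
    (x : ℤ → Fin d → ℝ)
    (hpath : ∀ n : ℤ, 1 ≤ n → x n ∈ D)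
    (hspan : Submodule.span ℝ (x '' Set.Icc (-(n₀ : ℤ) + 1) 0) = ⊤)
    (htrain : ∀ α : Fin d → ℝ,
        (∀ n : ℤ, -(n₀ : ℤ) + 1 ≤ n → n ≤ 0 → 0 ≤ 1 + α ⬝ᵥ x n) →
        ∀ y ∈ D, ε₀ ≤ 1 + α ⬝ᵥ y)
    (Φ : ℕ → (Fin d → ℝ) → ℝ)
    (hΦ : ∀ N α, Φ N α =
        ∑ n ∈ Finset.Icc (-(n₀ : ℤ) + 1) (N : ℤ), Real.log (1 + α ⬝ᵥ x n))
    (αs : ℕ → Fin d → ℝ)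
    (hαpos : ∀ N : ℕ, ∀ n : ℤ, -(n₀ : ℤ) + 1 ≤ n → n ≤ 0 → 0 < 1 + αs N ⬝ᵥ x n)
    (hαmax : ∀ N : ℕ, ∀ α : Fin d → ℝ,
        (∀ n : ℤ, -(n₀ : ℤ) + 1 ≤ n → n ≤ 0 → 0 ≤ 1 + α ⬝ᵥ x n) →
        Φ N α ≤ Φ N (αs N))
    (hfoc : ∀ N : ℕ,
        ∑ n ∈ Finset.Icc (-(n₀ : ℤ) + 1) (N : ℤ), (1 + αs N ⬝ᵥ x n)⁻¹ • x n = 0) :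
    ∀ n : ℕ, 1 ≤ n →
      Φ n (αs n) - Φ n (αs (n - 1)) ≤
        Real.log (1 +
          ((1 + αs n ⬝ᵥ x (n : ℤ))⁻¹ • x (n : ℤ)) ⬝ᵥ
            (∑ i ∈ Finset.Icc (-(n₀ : ℤ) + 1) ((n : ℤ) - 1),
              ((1 + αs (n - 1) ⬝ᵥ x i) * (1 + αs n ⬝ᵥ x i))⁻¹ •
                vecMulVec (x i) (x i))⁻¹.mulVec
            ((1 + αs (n - 1) ⬝ᵥ x (n : ℤ))⁻¹ • x (n : ℤ))) :=
  delta_phi_upper_bound_general d D ε₀ hε₀ n₀ x hpath hspan htrain Φ hΦ αs hαpos hαmax hfoc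
end

section
/- Let x_{-n₀+1},…,x_{n-1}, x_n be vectors in ℝ^d and let α, β ∈ ℝ^d satisfy 1+α·x_i > 0 for i = -n₀+1,…,n, 1+β·x_i > 0 for i = -n₀+1,…,n-1, the first-order conditions Σ_{i=-n₀+1}^{n} x_i/(1+α·x_i) = 0 and Σ_{i=-n₀+1}^{n-1} x_i/(1+β·x_i) = 0. Then ( Σ_{i=-n₀+1}^{n-1} x_i x_iᵗ / ((1+β·x_i)(1+α·x_i)) ) (α − β) = x_n/(1+α·x_n). -/
open Matrix

/-- The rank-one form of the scalar identity
`1/(1+b·x) - 1/(1+a·x) = (a-b)·x / ((1+b·x)(1+a·x))`. -/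
lemma smul_vecMulVec_self_mulVec_sub {K ι : Type*} [Field K] [Fintype ι] (x a b : ι → K)
    (ha : 1 + a ⬝ᵥ x ≠ 0) (hb : 1 + b ⬝ᵥ x ≠ 0) :
    (((1 + b ⬝ᵥ x) * (1 + a ⬝ᵥ x))⁻¹ • vecMulVec x x) *ᵥ (a - b) =
      (1 + b ⬝ᵥ x)⁻¹ • x - (1 + a ⬝ᵥ x)⁻¹ • x := by
  rw [smul_mulVec, vecMulVec_mulVec, op_smul_eq_smul, smul_smul, ← sub_smul, dotProduct_sub,
    dotProduct_comm x a, dotProduct_comm x b]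
  congr 1
  field_simp
  ring

/-- Identity (3.3): if `α` and `β` satisfy the first-order conditions up to
rounds `n` and `n-1` respectively, then
`(Σ_{i=-n₀+1}^{n-1} x_i x_iᵗ/((1+β·x_i)(1+α·x_i))) (α − β) = x_n/(1+α·x_n)`. -/
theorem delta_alpha_identity
    (d n₀ : ℕ) (n : ℤ) (hn : -(n₀ : ℤ) + 1 ≤ n)
    (x : ℤ → Fin d → ℝ) (α β : Fin d → ℝ)
    (hα : ∀ i ∈ Finset.Icc (-(n₀ : ℤ) + 1) n, 0 < 1 + α ⬝ᵥ x i)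
    (hβ : ∀ i ∈ Finset.Icc (-(n₀ : ℤ) + 1) (n - 1), 0 < 1 + β ⬝ᵥ x i)
    (hfocα : ∑ i ∈ Finset.Icc (-(n₀ : ℤ) + 1) n, (1 + α ⬝ᵥ x i)⁻¹ • x i = 0)
    (hfocβ : ∑ i ∈ Finset.Icc (-(n₀ : ℤ) + 1) (n - 1), (1 + β ⬝ᵥ x i)⁻¹ • x i = 0) :
    (∑ i ∈ Finset.Icc (-(n₀ : ℤ) + 1) (n - 1),
        ((1 + β ⬝ᵥ x i) * (1 + α ⬝ᵥ x i))⁻¹ • vecMulVec (x i) (x i)).mulVec (α - β) =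
      (1 + α ⬝ᵥ x n)⁻¹ • x n := by
  have hα' : ∀ i ∈ Finset.Icc (-(n₀ : ℤ) + 1) (n - 1), 0 < 1 + α ⬝ᵥ x i :=
    fun i hi => hα i (Finset.Icc_subset_Icc_right (by omega) hi)
  have hfocα' : ∑ i ∈ Finset.Icc (-(n₀ : ℤ) + 1) (n - 1), (1 + α ⬝ᵥ x i)⁻¹ • x i =
      -((1 + α ⬝ᵥ x n)⁻¹ • x n) := by
    rw [← Finset.insert_Icc_sub_one_right_eq_Icc hn, Finset.sum_insert (by simp)] at hfocα
    exact eq_neg_of_add_eq_zero_right hfocα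
  rw [sum_mulVec, Finset.sum_congr rfl fun i hi =>
      smul_vecMulVec_self_mulVec_sub (x i) α β (hα' i hi).ne' (hβ i hi).ne',
    Finset.sum_sub_distrib, hfocβ, hfocα', zero_sub, neg_neg]
end

section
/- Let x_{-n₀+1},…,x_N ∈ ℝ^d and α ∈ ℝ^d satisfy 1+α·x_n > 0 for all n and the first-order condition Σ_{n=-n₀+1}^{N} x_n/(1+α·x_n) = 0. Let g_N = (1/(N+n₀)) Σ_{n=-n₀+1}^{N} δ_{x_n} be the empirical distribution and g_N^* = (1/(N+n₀)) Σ_{n=-n₀+1}^{N} δ_{x_n}/(1+α·x_n) the empirical risk neutral distribution (a probability measure by the first-order condition). Then Σ_{n=-n₀+1}^{N} log(1+α·x_n) = (N+n₀) · D(g_N ‖ g_N^*), where D(·‖·) is the Kullback–Leibler divergence. -/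
open Matrix
open scoped Classical

open Finset Real

/-!
On an atom `v` of the empirical distribution, `g_N(v)` and `g_N^*(v)` are the same count of
indices divided by `N + n₀`, the second weighted by `(1 + α ⬝ᵥ v)⁻¹`; so `log (g_N / g_N^*) =
log (1 + α ⬝ᵥ v)` there, and `(N + n₀) * D(g_N ‖ g_N^*)` is the sum of `log (1 + α ⬝ᵥ x n)`
grouped by the value of `x n`.
-/

lemma sum_ite_eq_card_filter_mul {ι β : Type*} [DecidableEq β] (s : Finset ι) (x : ι → β)
    (h : β → ℝ) (v : β) :
    ∑ n ∈ s, (if x n = v then h (x n) else 0) = #{n ∈ s | x n = v} * h v := by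
  rw [← sum_filter, sum_congr rfl fun n hn => by rw [(mem_filter.1 hn).2], sum_const,
    nsmul_eq_mul]

lemma mul_sum_mul_log_div_eq_sum_mul_log {β : Type*} (t : Finset β) (c φ : β → ℝ) {M : ℝ}
    (hM : M ≠ 0) (hc : ∀ v ∈ t, c v ≠ 0) :
    M * ∑ v ∈ t, c v / M * log (c v / M / (c v * (φ v)⁻¹ / M)) = ∑ v ∈ t, c v * log (φ v) := by
  rw [mul_sum]
  refine sum_congr rfl fun v hv => ?_
  rw [div_div_div_cancel_right₀ hM, div_mul_cancel_left₀ (hc v hv), inv_inv, ← mul_assoc,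
    mul_div_cancel₀ _ hM]

theorem log_capital_eq_kl_divergence_general
    (d n₀ N : ℕ) (x : ℤ → Fin d → ℝ) (α : Fin d → ℝ)
    -- the empirical distribution `g_N` as a mass function
    (g : (Fin d → ℝ) → ℝ)
    (hg : ∀ v, g v =
      (∑ n ∈ Finset.Icc (-(n₀ : ℤ) + 1) (N : ℤ), if x n = v then (1 : ℝ) else 0) /
        ((N : ℝ) + n₀))
    -- the empirical risk neutral distribution `g_N^*` as a mass function
    (gs : (Fin d → ℝ) → ℝ)
    (hgs : ∀ v, gs v =
      (∑ n ∈ Finset.Icc (-(n₀ : ℤ) + 1) (N : ℤ),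
          if x n = v then (1 + α ⬝ᵥ x n)⁻¹ else 0) /
        ((N : ℝ) + n₀))
    -- the Kullback–Leibler divergence `D(g_N ‖ g_N^*)`
    (KL : ℝ)
    (hKL : KL = ∑ v ∈ (Finset.Icc (-(n₀ : ℤ) + 1) (N : ℤ)).image x,
        g v * Real.log (g v / gs v)) :
    ∑ n ∈ Finset.Icc (-(n₀ : ℤ) + 1) (N : ℤ), Real.log (1 + α ⬝ᵥ x n) =
      ((N : ℝ) + n₀) * KL := by
  set s := Icc (-(n₀ : ℤ) + 1) (N : ℤ)
  rcases s.eq_empty_or_nonempty with hs | ⟨m, hm⟩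
  · simp [hKL, hs]
  have hM : (N : ℝ) + n₀ ≠ 0 := by
    have hle := (mem_Icc.1 hm).1.trans (mem_Icc.1 hm).2
    have : (1 : ℝ) ≤ N + n₀ := by exact_mod_cast (by omega : (1 : ℤ) ≤ N + n₀)
    positivity
  have hfiber : ∀ v ∈ s.image x, ((#{n ∈ s | x n = v} : ℕ) : ℝ) ≠ 0 := by
    intro v hv
    obtain ⟨n, hn, rfl⟩ := mem_image.1 hv
    exact Nat.cast_ne_zero.2 (card_ne_zero.2 ⟨n, mem_filter.2 ⟨hn, rfl⟩⟩)
  have hgs' : ∀ v, gs v = #{n ∈ s | x n = v} * (1 + α ⬝ᵥ v)⁻¹ / ((N : ℝ) + n₀) := fun v => by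
    rw [hgs, sum_ite_eq_card_filter_mul s x (fun y => (1 + α ⬝ᵥ y)⁻¹)]
  simp only [hKL, hg, hgs', sum_boole]
  rw [mul_sum_mul_log_div_eq_sum_mul_log _ _ _ hM hfiber, sum_comp (fun y => log (1 + α ⬝ᵥ y)) x]
  simp only [nsmul_eq_mul]

/-- Identity (3.2) of the paper:  `Σ_n log(1+α·x_n) = (N+n₀) · D(g_N ‖ g_N^*)`,
where `g_N` is the empirical distribution of `x_{-n₀+1}, …, x_N`, `g_N^*` is the
empirical risk neutral distribution, and the Kullback–Leibler divergence of two
finitely supported distributions is `D(μ‖ν) = Σ_v μ(v) log(μ(v)/ν(v))`, the sum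
ranging over the distinct atoms. -/
theorem log_capital_eq_kl_divergence
    (d n₀ N : ℕ) (x : ℤ → Fin d → ℝ) (α : Fin d → ℝ)
    (hpos : ∀ n ∈ Finset.Icc (-(n₀ : ℤ) + 1) (N : ℤ), 0 < 1 + α ⬝ᵥ x n)
    (hfoc : ∑ n ∈ Finset.Icc (-(n₀ : ℤ) + 1) (N : ℤ), (1 + α ⬝ᵥ x n)⁻¹ • x n = 0)
    -- the empirical distribution `g_N` as a mass function
    (g : (Fin d → ℝ) → ℝ)
    (hg : ∀ v, g v =
      (∑ n ∈ Finset.Icc (-(n₀ : ℤ) + 1) (N : ℤ), if x n = v then (1 : ℝ) else 0) /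
        ((N : ℝ) + n₀))
    -- the empirical risk neutral distribution `g_N^*` as a mass function
    (gs : (Fin d → ℝ) → ℝ)
    (hgs : ∀ v, gs v =
      (∑ n ∈ Finset.Icc (-(n₀ : ℤ) + 1) (N : ℤ),
          if x n = v then (1 + α ⬝ᵥ x n)⁻¹ else 0) /
        ((N : ℝ) + n₀))
    -- the Kullback–Leibler divergence `D(g_N ‖ g_N^*)`
    (KL : ℝ)
    (hKL : KL = ∑ v ∈ (Finset.Icc (-(n₀ : ℤ) + 1) (N : ℤ)).image x,
        g v * Real.log (g v / gs v)) :
    ∑ n ∈ Finset.Icc (-(n₀ : ℤ) + 1) (N : ℤ), Real.log (1 + α ⬝ᵥ x n) =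
      ((N : ℝ) + n₀) * KL :=
  log_capital_eq_kl_divergence_general d n₀ N x α g hg gs hgs KL hKL
end

section
/- Let C ≥ 1 and let t ∈ ℝ satisfy t > −1 and 1+t ≤ C. Then (1+t)·log(1+t) ≥ t + t²/(2C). -/
/-!
Put `g(y) = (1 + y) log (1 + y) - y - y² / (2C)`, so that `g 0 = 0` and `g' y = log (1 + y) - y / C`.
On `[0, t]` we have `y / C ≤ y / (1 + y) ≤ log (1 + y)` because `1 + y ≤ 1 + t ≤ C`, and on `[t, 0]`
we have `log (1 + y) ≤ y ≤ y / C` because `y ≤ 0` and `C ≥ 1`. Hence `g` has a minimum at `0`.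
-/

open Real Set

theorem apply_le_apply_of_hasDerivAt_sign {f f' : ℝ → ℝ} {a t : ℝ}
    (hf : ∀ x ∈ uIcc a t, HasDerivAt f (f' x) x)
    (hright : ∀ x ∈ Ioo a t, 0 ≤ f' x) (hleft : ∀ x ∈ Ioo t a, f' x ≤ 0) : f a ≤ f t := by
  rcases le_total a t with hat | hta
  · rw [uIcc_of_le hat] at hf
    refine monotoneOn_of_hasDerivWithinAt_nonneg (f' := f') (convex_Icc a t) ?_ ?_ ?_
      (left_mem_Icc.2 hat) (right_mem_Icc.2 hat) hat
    · exact fun x hx => (hf x hx).continuousAt.continuousWithinAt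
    · rw [interior_Icc]
      exact fun x hx => (hf x (Ioo_subset_Icc_self hx)).hasDerivWithinAt
    · rwa [interior_Icc]
  · rw [uIcc_of_ge hta] at hf
    refine antitoneOn_of_hasDerivWithinAt_nonpos (f' := f') (convex_Icc t a) ?_ ?_ ?_
      (left_mem_Icc.2 hta) (right_mem_Icc.2 hta) hta
    · exact fun x hx => (hf x hx).continuousAt.continuousWithinAt
    · rw [interior_Icc]
      exact fun x hx => (hf x (Ioo_subset_Icc_self hx)).hasDerivWithinAt
    · rwa [interior_Icc]

theorem Real.hasDerivAt_one_add_mul_log_one_add {x : ℝ} (hx : x ≠ -1) :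
    HasDerivAt (fun y => (1 + y) * log (1 + y)) (log (1 + x) + 1) x :=
  (Real.hasDerivAt_mul_log (by contrapose! hx; linarith)).comp_const_add 1 x

theorem Real.div_one_add_le_log_one_add {x : ℝ} (hx : -1 < x) : x / (1 + x) ≤ log (1 + x) := by
  have hx' : 0 < 1 + x := by linarith
  calc x / (1 + x) = 1 - (1 + x)⁻¹ := by field_simp; ring
    _ ≤ log (1 + x) := Real.one_sub_inv_le_log_of_pos hx'

theorem Real.div_le_log_one_add {x C : ℝ} (hx : 0 ≤ x) (hxC : 1 + x ≤ C) :
    x / C ≤ log (1 + x) :=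
  (div_le_div_of_nonneg_left hx (by linarith) hxC).trans (div_one_add_le_log_one_add (by linarith))

theorem Real.log_one_add_le_div {x C : ℝ} (hx : -1 < x) (hx0 : x ≤ 0) (hC : 1 ≤ C) :
    log (1 + x) ≤ x / C := by
  have hlog : log (1 + x) ≤ x := by linarith [Real.log_le_sub_one_of_pos (x := 1 + x) (by linarith)]
  have hdiv : x ≤ x / C := by rw [le_div_iff₀ (by linarith)]; nlinarith
  exact hlog.trans hdiv

theorem log_lower_bound (C t : ℝ) (hC : 1 ≤ C) (ht : -1 < t) (htC : 1 + t ≤ C) :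
    t + t ^ 2 / (2 * C) ≤ (1 + t) * Real.log (1 + t) := by
  set g : ℝ → ℝ := fun y => (1 + y) * log (1 + y) - y - y ^ 2 / (2 * C)
  have hg : ∀ x ∈ uIcc 0 t, HasDerivAt g (log (1 + x) - x / C) x := by
    intro x hx
    have hx : -1 < x := (lt_inf_iff.2 ⟨neg_one_lt_zero, ht⟩).trans_le hx.1
    refine (((Real.hasDerivAt_one_add_mul_log_one_add hx.ne').sub (hasDerivAt_id' x)).sub
      ((hasDerivAt_pow 2 x).div_const (2 * C))).congr_deriv ?_
    norm_num
    ring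
  have hmin : g 0 ≤ g t := apply_le_apply_of_hasDerivAt_sign hg
    (fun x hx => sub_nonneg.2 (Real.div_le_log_one_add hx.1.le (by linarith [hx.2])))
    (fun x hx => sub_nonpos.2 (Real.log_one_add_le_div (by linarith [hx.1]) hx.2.le hC))
  simp only [g] at hmin
  norm_num at hmin
  linarith
end

section
/- Let x_{-n₀+1},…,x_N ∈ ℝ^d and α ∈ ℝ^d satisfy 1+α·x_n > 0 for all n, the first-order condition Σ_{n=-n₀+1}^{N} x_n/(1+α·x_n) = 0, and 1+α·x_n ≤ C₁ for all n, where C₁ ≥ 1. Then Σ_{n=-n₀+1}^{N} log(1+α·x_n) ≥ (1/(2C₁)) · Σ_{n=-n₀+1}^{N} (α·x_n)²/(1+α·x_n). -/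
/-!
With `t = 1 + y`, the pointwise bound `log t ≥ y / t + y² / (2 C₁ t)` holds whenever
`0 < t ≤ C₁` and `1 ≤ C₁`: for `t ≤ 1` it follows from `sinh s ≥ s` at `s = -log t`, and for
`t ≥ 1` from the first two terms of the series of `-log (1 - u)` at `u = 1 - 1/t`.
Summing over `n` with `y = α·x_n`, the first-order condition makes `Σ y / t = α · Σ x_n / t`
vanish.
-/

open Matrix

namespace Real

lemma sub_inv_div_two_le_log {t : ℝ} (ht : 0 < t) (ht1 : t ≤ 1) : (t - t⁻¹) / 2 ≤ log t := by
  have h := self_le_sinh_iff.mpr (neg_nonneg.mpr (log_nonpos ht.le ht1))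
  rw [sinh_eq, neg_neg, exp_log ht, exp_neg, exp_log ht] at h
  linarith

lemma one_sub_inv_add_sq_div_two_le_log {t : ℝ} (ht : 1 ≤ t) :
    1 - t⁻¹ + (1 - t⁻¹) ^ 2 / 2 ≤ log t := by
  have hu0 : 0 ≤ 1 - t⁻¹ := sub_nonneg.mpr (inv_le_one_of_one_le₀ ht)
  have hu1 : |1 - t⁻¹| < 1 := by
    rw [abs_of_nonneg hu0]
    linarith [inv_pos.mpr (zero_lt_one.trans_le ht)]
  have h := sum_le_hasSum (Finset.range 2) (fun n _ => by positivity)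
    (hasSum_pow_div_log_of_abs_lt_one hu1)
  rw [sub_sub_cancel, log_inv, neg_neg] at h
  norm_num [Finset.sum_range_succ] at h
  exact h

lemma one_sub_inv_add_sq_div_le_log {t C : ℝ} (hC : 1 ≤ C) (ht : 0 < t) (htC : t ≤ C) :
    1 - t⁻¹ + (t - 1) ^ 2 / (2 * C * t) ≤ log t := by
  rcases le_total t 1 with ht1 | ht1
  · calc 1 - t⁻¹ + (t - 1) ^ 2 / (2 * C * t)
        ≤ 1 - t⁻¹ + (t - 1) ^ 2 / (2 * t) := by gcongr; nlinarith
      _ = (t - t⁻¹) / 2 := by field_simp; ring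
      _ ≤ log t := sub_inv_div_two_le_log ht ht1
  · calc 1 - t⁻¹ + (t - 1) ^ 2 / (2 * C * t)
        ≤ 1 - t⁻¹ + (t - 1) ^ 2 / (2 * t * t) := by gcongr
      _ = 1 - t⁻¹ + (1 - t⁻¹) ^ 2 / 2 := by field_simp
      _ ≤ log t := one_sub_inv_add_sq_div_two_le_log ht1

end Real

lemma sum_div_one_add_dotProduct_eq_zero {ι m : Type*} [Fintype m] {s : Finset ι}
    {x : ι → m → ℝ} {α : m → ℝ} (h : ∑ i ∈ s, (1 + α ⬝ᵥ x i)⁻¹ • x i = 0) :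
    ∑ i ∈ s, (α ⬝ᵥ x i) / (1 + α ⬝ᵥ x i) = 0 := by
  simpa [dotProduct_sum, dotProduct_smul, div_eq_inv_mul] using congrArg (α ⬝ᵥ ·) h

lemma sum_sq_div_le_sum_log_one_add {ι : Type*} {s : Finset ι} {y : ι → ℝ} {C : ℝ}
    (hC : 1 ≤ C) (hpos : ∀ i ∈ s, 0 < 1 + y i) (hle : ∀ i ∈ s, 1 + y i ≤ C)
    (hfoc : ∑ i ∈ s, y i / (1 + y i) = 0) :
    1 / (2 * C) * ∑ i ∈ s, y i ^ 2 / (1 + y i) ≤ ∑ i ∈ s, Real.log (1 + y i) := by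
  calc 1 / (2 * C) * ∑ i ∈ s, y i ^ 2 / (1 + y i)
      = ∑ i ∈ s, (1 - (1 + y i)⁻¹ + (1 + y i - 1) ^ 2 / (2 * C * (1 + y i))) := by
        rw [Finset.mul_sum, ← add_zero (∑ i ∈ s, _), ← hfoc, ← Finset.sum_add_distrib]
        refine Finset.sum_congr rfl fun i hi => ?_
        have := (hpos i hi).ne'
        field_simp
        ring
    _ ≤ ∑ i ∈ s, Real.log (1 + y i) :=
        Finset.sum_le_sum fun i hi => Real.one_sub_inv_add_sq_div_le_log hC (hpos i hi) (hle i hi)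

/-- Inequality (3.7): under the first-order condition and the bound
`1+α·x_n ≤ C₁`, the log capital of the hindsight strategy is bounded below:
`Σ_n log(1+α·x_n) ≥ (1/(2C₁)) Σ_n (α·x_n)²/(1+α·x_n)`. -/
theorem hindsight_log_capital_lower_bound
    (d n₀ N : ℕ) (C₁ : ℝ) (hC₁ : 1 ≤ C₁)
    (x : ℤ → Fin d → ℝ) (α : Fin d → ℝ)
    (hpos : ∀ n ∈ Finset.Icc (-(n₀ : ℤ) + 1) (N : ℤ), 0 < 1 + α ⬝ᵥ x n)
    (hub : ∀ n ∈ Finset.Icc (-(n₀ : ℤ) + 1) (N : ℤ), 1 + α ⬝ᵥ x n ≤ C₁)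
    (hfoc : ∑ n ∈ Finset.Icc (-(n₀ : ℤ) + 1) (N : ℤ), (1 + α ⬝ᵥ x n)⁻¹ • x n = 0) :
    (1 / (2 * C₁)) *
        ∑ n ∈ Finset.Icc (-(n₀ : ℤ) + 1) (N : ℤ), (α ⬝ᵥ x n) ^ 2 / (1 + α ⬝ᵥ x n) ≤
      ∑ n ∈ Finset.Icc (-(n₀ : ℤ) + 1) (N : ℤ), Real.log (1 + α ⬝ᵥ x n) :=
  sum_sq_div_le_sum_log_one_add hC₁ hpos hub (sum_div_one_add_dotProduct_eq_zero hfoc)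
end
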